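/- arXiv:1805.09126 — 6 statements merged into one kernel-verified Lean document; each statement's English description precedes it below -/
import Mathlib

section
/- If D is a linear discrete derivative operator of order of accuracy p > 2 (with maximal p), then there exists no averaging operator A of any order q ∈ ℕ such that the product rule D(uv) = (Au)(Dv) + (Du)(Av) holds for all smooth grid functions u, v. -/
open Asymptotics Topology
open Real

noncomputable def cg (K : ℝ) : ℝ → ℝ := fun t => Real.cos (K * t)
noncomputable def sg (K : ℝ) : ℝ → ℝ := fun t => Real.sin (K * t)

lemma contDiff_cg (K : ℝ) : ContDiff ℝ (⊤ : ℕ∞) (cg K) :=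
  Real.contDiff_cos.comp (contDiff_const.mul contDiff_id)
lemma contDiff_sg (K : ℝ) : ContDiff ℝ (⊤ : ℕ∞) (sg K) :=
  Real.contDiff_sin.comp (contDiff_const.mul contDiff_id)

lemma iterDeriv_cos_shift (k : ℝ) : ∀ (n : ℕ) (C a : ℝ),
    iteratedDeriv n (fun t => C * Real.cos (k * t + a))
      = fun t => C * k ^ n * Real.cos (k * t + a + n * (π / 2)) := by
  intro n
  induction n with
  | zero => intro C a; simp
  | succ n ih =>
    intro C a
    rw [iteratedDeriv_succ']
    have hderiv : (deriv fun t => C * Real.cos (k * t + a))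
        = fun t => (C * k) * Real.cos (k * t + (a + π / 2)) := by
      funext t
      have h1 : HasDerivAt (fun t : ℝ => k * t + a) k t := by
        simpa using ((hasDerivAt_id t).const_mul k).add_const a
      have h2 : HasDerivAt (fun t : ℝ => C * Real.cos (k * t + a))
          (C * (-Real.sin (k * t + a) * k)) t :=
        (h1.cos).const_mul C
      rw [h2.deriv]
      rw [show k * t + (a + π / 2) = (k * t + a) + π / 2 by ring,
        Real.cos_add_pi_div_two]
      ring
    rw [hderiv, ih (C * k) (a + π / 2)]
    funext t
    push_cast
    ring_nf

lemma iterDeriv_sin_shift (k : ℝ) : ∀ (n : ℕ) (C a : ℝ),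
    iteratedDeriv n (fun t => C * Real.sin (k * t + a))
      = fun t => C * k ^ n * Real.sin (k * t + a + n * (π / 2)) := by
  intro n
  induction n with
  | zero => intro C a; simp
  | succ n ih =>
    intro C a
    rw [iteratedDeriv_succ']
    have hderiv : (deriv fun t => C * Real.sin (k * t + a))
        = fun t => (C * k) * Real.sin (k * t + (a + π / 2)) := by
      funext t
      have h1 : HasDerivAt (fun t : ℝ => k * t + a) k t := by
        simpa using ((hasDerivAt_id t).const_mul k).add_const a
      have h2 : HasDerivAt (fun t : ℝ => C * Real.sin (k * t + a))
          (C * (Real.cos (k * t + a) * k)) t :=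
        (h1.sin).const_mul C
      rw [h2.deriv]
      rw [show k * t + (a + π / 2) = (k * t + a) + π / 2 by ring,
        Real.sin_add_pi_div_two]
      ring
    rw [hderiv, ih (C * k) (a + π / 2)]
    funext t
    push_cast
    ring_nf

lemma iterDeriv_cg (K : ℝ) (n : ℕ) :
    iteratedDeriv n (cg K) = fun t => K ^ n * Real.cos (K * t + n * (π / 2)) := by
  have h := iterDeriv_cos_shift K n 1 0
  have e : (fun t => (1:ℝ) * Real.cos (K * t + 0)) = cg K := by
    funext t; simp [cg]
  rw [e] at h
  rw [h]; funext t; ring_nf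

lemma iterDeriv_sg (K : ℝ) (n : ℕ) :
    iteratedDeriv n (sg K) = fun t => K ^ n * Real.sin (K * t + n * (π / 2)) := by
  have h := iterDeriv_sin_shift K n 1 0
  have e : (fun t => (1:ℝ) * Real.sin (K * t + 0)) = sg K := by
    funext t; simp [sg]
  rw [e] at h
  rw [h]; funext t; ring_nf

lemma cis (θ : ℝ) : (Real.cos θ : ℂ) + Complex.I * (Real.sin θ : ℂ)
    = Complex.exp ((θ : ℂ) * Complex.I) := by
  rw [Complex.exp_mul_I, ← Complex.ofReal_cos, ← Complex.ofReal_sin]; ring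

lemma exp_pi_div_two_mul_I : Complex.exp ((↑(π / 2) : ℂ) * Complex.I) = Complex.I := by
  rw [Complex.exp_mul_I, ← Complex.ofReal_cos, ← Complex.ofReal_sin,
    Real.cos_pi_div_two, Real.sin_pi_div_two]
  simp

lemma cis_pow (k m : ℕ) (t : ℝ) :
    (Real.cos ((k:ℝ) * t + (m:ℝ) * (π / 2)) : ℂ)
      + Complex.I * (Real.sin ((k:ℝ) * t + (m:ℝ) * (π / 2)) : ℂ)
    = Complex.exp ((t : ℂ) * Complex.I) ^ k * Complex.I ^ m := by
  rw [cis]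
  rw [show ((((k:ℝ) * t + (m:ℝ) * (π / 2)) : ℝ) : ℂ) * Complex.I
      = (k:ℕ) * ((t:ℂ) * Complex.I) + (m:ℕ) * ((↑(π/2) : ℂ) * Complex.I) by push_cast; ring]
  rw [Complex.exp_add, Complex.exp_nat_mul, Complex.exp_nat_mul, exp_pi_div_two_mul_I]

lemma cis_one (k : ℕ) (t : ℝ) :
    (Real.cos ((k:ℝ) * t + π / 2) : ℂ) + Complex.I * (Real.sin ((k:ℝ) * t + π / 2) : ℂ)
    = Complex.exp ((t : ℂ) * Complex.I) ^ k * Complex.I := by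
  have h := cis_pow k 1 t
  push_cast at h ⊢
  simp only [one_mul, pow_one] at h
  exact h

lemma three_pow_ge (n : ℕ) (hn : 3 ≤ n) : 3 * (2:ℝ) ^ n ≤ 3 ^ n := by
  induction n with
  | zero => omega
  | succ m ih =>
    rcases Nat.lt_or_ge m 3 with hm | hm
    · interval_cases m <;> first | omega | norm_num
    · have := ih hm
      have h2 : (0:ℝ) < 2 ^ m := by positivity
      calc 3 * (2:ℝ) ^ (m+1) = 2 * (3 * 2 ^ m) := by ring
        _ ≤ 2 * 3 ^ m := by linarith
        _ ≤ 3 ^ (m+1) := by rw [pow_succ]; nlinarith [pow_pos (show (0:ℝ) < 3 by norm_num) m]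

lemma Kpos (n : ℕ) (hn : 4 ≤ n) :
    (0:ℝ) < 4 ^ n - 4 * 3 ^ n + 6 * 2 ^ n - 4 := by
  induction n with
  | zero => omega
  | succ m ih =>
    rcases Nat.lt_or_ge m 4 with hm | hm
    · interval_cases m <;> first | omega | norm_num
    · have h1 := ih hm
      have h2 : 3 * (2:ℝ) ^ m ≤ 3 ^ m := three_pow_ge m (by omega)
      have h3 : (0:ℝ) < 2 ^ m := by positivity
      have e4 : (4:ℝ) ^ (m+1) = 4 * 4 ^ m := by rw [pow_succ]; ring
      have e3 : (3:ℝ) ^ (m+1) = 3 * 3 ^ m := by rw [pow_succ]; ring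
      have e2 : (2:ℝ) ^ (m+1) = 2 * 2 ^ m := by rw [pow_succ]; ring
      rw [e4, e3, e2]
      nlinarith

lemma cg_two (t : ℝ) : cg 2 t = cg 1 t * cg 1 t - sg 1 t * sg 1 t := by
  simp only [cg, sg]
  rw [show (2:ℝ) * t = 1 * t + 1 * t by ring, Real.cos_add]
lemma sg_two (t : ℝ) : sg 2 t = sg 1 t * cg 1 t + cg 1 t * sg 1 t := by
  simp only [cg, sg]
  rw [show (2:ℝ) * t = 1 * t + 1 * t by ring, Real.sin_add]
lemma cg_three (t : ℝ) : cg 3 t = cg 1 t * cg 2 t - sg 1 t * sg 2 t := by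
  simp only [cg, sg]
  rw [show (3:ℝ) * t = 1 * t + 2 * t by ring, Real.cos_add]
lemma sg_three (t : ℝ) : sg 3 t = sg 1 t * cg 2 t + cg 1 t * sg 2 t := by
  simp only [cg, sg]
  rw [show (3:ℝ) * t = 1 * t + 2 * t by ring, Real.sin_add]
lemma cg_four (t : ℝ) : cg 4 t = cg 2 t * cg 2 t - sg 2 t * sg 2 t := by
  simp only [cg, sg]
  rw [show (4:ℝ) * t = 2 * t + 2 * t by ring, Real.cos_add]
lemma sg_four (t : ℝ) : sg 4 t = sg 2 t * cg 2 t + cg 2 t * sg 2 t := by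
  simp only [cg, sg]
  rw [show (4:ℝ) * t = 2 * t + 2 * t by ring, Real.sin_add]

lemma key_alg (I z x c J a b d : ℂ) (hI : I ^ 2 = -1) :
    2 * (I * z + x * (c * J * z)) * (2 * (I * z ^ 2) + x * (c * a * J * z ^ 2))
        * (3 * (I * z ^ 3) + x * (c * b * J * z ^ 3))
      - (2 * (I * z ^ 2) + x * (c * a * J * z ^ 2)) ^ 3
      - (4 * (I * z ^ 4) + x * (c * d * J * z ^ 4)) * (I * z + x * (c * J * z)) ^ 2
    = x * c * J * z ^ 6 * (d - 4 * b + 6 * a - 4)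
      + x ^ 2 * z ^ 6 * (I * (c ^ 2 * J ^ 2 * (-4 - 2 * d + 4 * b + 6 * a + 2 * (a * b) - 6 * a ^ 2))
          + x * (c ^ 3 * J ^ 3 * (-d + 2 * (a * b) - a ^ 3))) := by
  linear_combination (-(x * c * J * z ^ 6 * (d - 4 * b + 6 * a - 4))) * hI

/-- No discrete product rule for derivative operators of order of accuracy `p > 2`:
if the family of linear difference operators `D h` on the grids `x h` admits, for every
smooth function, the asymptotic expansion
`(D u)_i = u'(x_i) + u^{(p+1)}(x_i) C^D_i h^p + O(h^{p+1})` with `C^D` not identically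
zero (order `p` maximal), then there is no averaging operator `A` of any order `q ∈ ℕ`
(i.e. satisfying `(A u)_i = u(x_i) + C^A_i(u) h^q + O(h^{q+1})`) such that the product
rule `D(uv) = (Au)(Dv) + (Du)(Av)` holds for all smooth grid functions `u`, `v`. -/
theorem no_product_rule_higher_order
    (p : ℕ) (hp : 2 < p)
    (x : ℝ → ℤ → ℝ)
    (hx : ∀ h : ℝ, 0 < h → ∀ i : ℤ, x h i < x h (i + 1))
    (D : ℝ → (ℤ → ℝ) → ℤ → ℝ)
    (hDlin : ∀ h : ℝ, IsLinearMap ℝ (D h))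
    (CD : ℤ → ℝ) (i₀ : ℤ) (hCD : CD i₀ ≠ 0)
    (hD : ∀ u : ℝ → ℝ, ContDiff ℝ (⊤ : ℕ∞) u → ∀ i : ℤ,
      (fun h : ℝ => D h (fun j => u (x h j)) i - deriv u (x h i)
          - iteratedDeriv (p + 1) u (x h i) * CD i * h ^ p)
        =O[𝓝[>] (0:ℝ)] fun h : ℝ => h ^ (p + 1)) :
    ¬ ∃ (q : ℕ) (A : ℝ → (ℤ → ℝ) → ℤ → ℝ) (CA : (ℝ → ℝ) → ℤ → ℝ),
      (∀ u : ℝ → ℝ, ContDiff ℝ (⊤ : ℕ∞) u → ∀ i : ℤ,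
        (fun h : ℝ => A h (fun j => u (x h j)) i - u (x h i) - CA u i * h ^ q)
          =O[𝓝[>] (0:ℝ)] fun h : ℝ => h ^ (q + 1)) ∧
      (∀ u v : ℝ → ℝ, ContDiff ℝ (⊤ : ℕ∞) u → ContDiff ℝ (⊤ : ℕ∞) v →
        ∀ h : ℝ, 0 < h → ∀ i : ℤ,
          D h (fun j => u (x h j) * v (x h j)) i
            = A h (fun j => u (x h j)) i * D h (fun j => v (x h j)) i
              + D h (fun j => u (x h j)) i * A h (fun j => v (x h j)) i) := by
  rintro ⟨q, A, CA, -, hPR⟩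
  -- the filter
  set l : Filter ℝ := 𝓝[>] (0:ℝ) with hldef
  have hsmall : ∀ᶠ h : ℝ in l, 0 < h ∧ h ≤ 1 := by
    have h1 : ∀ᶠ h : ℝ in l, 0 < h := eventually_mem_nhdsWithin
    have h2 : ∀ᶠ h : ℝ in l, h ≤ 1 := by
      have h3 : ∀ᶠ h : ℝ in 𝓝 (0:ℝ), h ≤ 1 := by
        filter_upwards [Iio_mem_nhds (show (0:ℝ) < 1 by norm_num)] with h hh
        exact le_of_lt hh
      exact h3.filter_mono nhdsWithin_le_nhds
    exact h1.and h2
  -- complexified quantities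
  obtain ⟨Z, hZ⟩ : ∃ Z : ℝ → ℂ, Z = fun h => Complex.exp ((x h i₀ : ℂ) * Complex.I) := ⟨_, rfl⟩
  obtain ⟨W, hW⟩ : ∃ W : ℕ → ℝ → ℂ, W = fun (k : ℕ) (h : ℝ) =>
      ((D h (fun j => cg (k:ℝ) (x h j)) i₀ : ℝ) : ℂ)
        + Complex.I * ((D h (fun j => sg (k:ℝ) (x h j)) i₀ : ℝ) : ℂ) := ⟨_, rfl⟩
  obtain ⟨Ac, hAc⟩ : ∃ Ac : ℕ → ℝ → ℂ, Ac = fun (k : ℕ) (h : ℝ) =>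
      ((A h (fun j => cg (k:ℝ) (x h j)) i₀ : ℝ) : ℂ)
        + Complex.I * ((A h (fun j => sg (k:ℝ) (x h j)) i₀ : ℝ) : ℂ) := ⟨_, rfl⟩
  obtain ⟨Y, hY⟩ : ∃ Y : ℕ → ℝ → ℂ, Y = fun (k : ℕ) (h : ℝ) =>
      ((k:ℂ) * Complex.I) * Z h ^ k
        + ((h:ℂ))^p * (((CD i₀ : ℂ) * (k:ℂ)^(p+1) * Complex.I^(p+1)) * Z h ^ k) := ⟨_, rfl⟩
  have hnormZ : ∀ h : ℝ, ‖Z h‖ = 1 := by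
    intro h
    rw [hZ]
    simp [Complex.norm_exp_ofReal_mul_I]
  -- Step A : asymptotic expansion of the complexified difference operator
  have hbig : ∀ k : ℕ, (fun h : ℝ => W k h - Y k h) =O[l] fun h : ℝ => h ^ (p+1) := by
    intro k
    have hc := hD (cg (k:ℝ)) (contDiff_cg _) i₀
    have hs := hD (sg (k:ℝ)) (contDiff_sg _) i₀
    simp only [← iteratedDeriv_one, iterDeriv_cg, iterDeriv_sg, Nat.cast_one, pow_one,
      one_mul] at hc hs
    have hcC := (Complex.ofRealCLM.isBigO_comp _ _).trans hc
    have hsC := ((Complex.ofRealCLM.isBigO_comp _ _).trans hs).const_mul_left Complex.I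
    have hsum := hcC.add hsC
    refine hsum.congr' (Filter.EventuallyEq.of_eq ?_) (by rfl)
    funext h
    simp only [hW, hY, hZ, Complex.ofRealCLM_apply]
    linear_combination (norm := (push_cast; ring1))
      (-(k:ℂ)) * cis_one k (x h i₀)
      + (-(CD i₀ : ℂ)) * (k:ℂ)^(p+1) * ((h:ℝ):ℂ)^p * cis_pow k (p+1) (x h i₀)
  -- Step B : product rule implies algebraic identities for the complexified operator
  have hsub : ∀ h : ℝ, ∀ F G : ℤ → ℝ, D h (F - G) i₀ = D h F i₀ - D h G i₀ := by
    intro h F G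
    exact congrFun (map_sub (IsLinearMap.mk' (D h) (hDlin h)) F G) i₀
  have hadd : ∀ h : ℝ, ∀ F G : ℤ → ℝ, D h (F + G) i₀ = D h F i₀ + D h G i₀ := by
    intro h F G
    exact congrFun (map_add (IsLinearMap.mk' (D h) (hDlin h)) F G) i₀
  have hRC2 : ∀ h : ℝ, 0 < h → D h (fun j => cg 2 (x h j)) i₀
      = (A h (fun j => cg 1 (x h j)) i₀ * D h (fun j => cg 1 (x h j)) i₀
          + D h (fun j => cg 1 (x h j)) i₀ * A h (fun j => cg 1 (x h j)) i₀)
        - (A h (fun j => sg 1 (x h j)) i₀ * D h (fun j => sg 1 (x h j)) i₀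
          + D h (fun j => sg 1 (x h j)) i₀ * A h (fun j => sg 1 (x h j)) i₀) := by
    intro h hpos
    have e : (fun j => cg 2 (x h j))
        = (fun j => cg 1 (x h j) * cg 1 (x h j)) - (fun j => sg 1 (x h j) * sg 1 (x h j)) := by
      funext j; exact cg_two _
    rw [e, hsub, hPR (cg 1) (cg 1) (contDiff_cg 1) (contDiff_cg 1) h hpos i₀,
      hPR (sg 1) (sg 1) (contDiff_sg 1) (contDiff_sg 1) h hpos i₀]
  have hRS2 : ∀ h : ℝ, 0 < h → D h (fun j => sg 2 (x h j)) i₀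
      = (A h (fun j => sg 1 (x h j)) i₀ * D h (fun j => cg 1 (x h j)) i₀
          + D h (fun j => sg 1 (x h j)) i₀ * A h (fun j => cg 1 (x h j)) i₀)
        + (A h (fun j => cg 1 (x h j)) i₀ * D h (fun j => sg 1 (x h j)) i₀
          + D h (fun j => cg 1 (x h j)) i₀ * A h (fun j => sg 1 (x h j)) i₀) := by
    intro h hpos
    have e : (fun j => sg 2 (x h j))
        = (fun j => sg 1 (x h j) * cg 1 (x h j)) + (fun j => cg 1 (x h j) * sg 1 (x h j)) := by
      funext j; exact sg_two _
    rw [e, hadd, hPR (sg 1) (cg 1) (contDiff_sg 1) (contDiff_cg 1) h hpos i₀,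
      hPR (cg 1) (sg 1) (contDiff_cg 1) (contDiff_sg 1) h hpos i₀]
  have hRC3 : ∀ h : ℝ, 0 < h → D h (fun j => cg 3 (x h j)) i₀
      = (A h (fun j => cg 1 (x h j)) i₀ * D h (fun j => cg 2 (x h j)) i₀
          + D h (fun j => cg 1 (x h j)) i₀ * A h (fun j => cg 2 (x h j)) i₀)
        - (A h (fun j => sg 1 (x h j)) i₀ * D h (fun j => sg 2 (x h j)) i₀
          + D h (fun j => sg 1 (x h j)) i₀ * A h (fun j => sg 2 (x h j)) i₀) := by
    intro h hpos
    have e : (fun j => cg 3 (x h j))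
        = (fun j => cg 1 (x h j) * cg 2 (x h j)) - (fun j => sg 1 (x h j) * sg 2 (x h j)) := by
      funext j; exact cg_three _
    rw [e, hsub, hPR (cg 1) (cg 2) (contDiff_cg 1) (contDiff_cg 2) h hpos i₀,
      hPR (sg 1) (sg 2) (contDiff_sg 1) (contDiff_sg 2) h hpos i₀]
  have hRS3 : ∀ h : ℝ, 0 < h → D h (fun j => sg 3 (x h j)) i₀
      = (A h (fun j => sg 1 (x h j)) i₀ * D h (fun j => cg 2 (x h j)) i₀
          + D h (fun j => sg 1 (x h j)) i₀ * A h (fun j => cg 2 (x h j)) i₀)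
        + (A h (fun j => cg 1 (x h j)) i₀ * D h (fun j => sg 2 (x h j)) i₀
          + D h (fun j => cg 1 (x h j)) i₀ * A h (fun j => sg 2 (x h j)) i₀) := by
    intro h hpos
    have e : (fun j => sg 3 (x h j))
        = (fun j => sg 1 (x h j) * cg 2 (x h j)) + (fun j => cg 1 (x h j) * sg 2 (x h j)) := by
      funext j; exact sg_three _
    rw [e, hadd, hPR (sg 1) (cg 2) (contDiff_sg 1) (contDiff_cg 2) h hpos i₀,
      hPR (cg 1) (sg 2) (contDiff_cg 1) (contDiff_sg 2) h hpos i₀]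
  have hRC4 : ∀ h : ℝ, 0 < h → D h (fun j => cg 4 (x h j)) i₀
      = (A h (fun j => cg 2 (x h j)) i₀ * D h (fun j => cg 2 (x h j)) i₀
          + D h (fun j => cg 2 (x h j)) i₀ * A h (fun j => cg 2 (x h j)) i₀)
        - (A h (fun j => sg 2 (x h j)) i₀ * D h (fun j => sg 2 (x h j)) i₀
          + D h (fun j => sg 2 (x h j)) i₀ * A h (fun j => sg 2 (x h j)) i₀) := by
    intro h hpos
    have e : (fun j => cg 4 (x h j))
        = (fun j => cg 2 (x h j) * cg 2 (x h j)) - (fun j => sg 2 (x h j) * sg 2 (x h j)) := by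
      funext j; exact cg_four _
    rw [e, hsub, hPR (cg 2) (cg 2) (contDiff_cg 2) (contDiff_cg 2) h hpos i₀,
      hPR (sg 2) (sg 2) (contDiff_sg 2) (contDiff_sg 2) h hpos i₀]
  have hRS4 : ∀ h : ℝ, 0 < h → D h (fun j => sg 4 (x h j)) i₀
      = (A h (fun j => sg 2 (x h j)) i₀ * D h (fun j => cg 2 (x h j)) i₀
          + D h (fun j => sg 2 (x h j)) i₀ * A h (fun j => cg 2 (x h j)) i₀)
        + (A h (fun j => cg 2 (x h j)) i₀ * D h (fun j => sg 2 (x h j)) i₀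
          + D h (fun j => cg 2 (x h j)) i₀ * A h (fun j => sg 2 (x h j)) i₀) := by
    intro h hpos
    have e : (fun j => sg 4 (x h j))
        = (fun j => sg 2 (x h j) * cg 2 (x h j)) + (fun j => cg 2 (x h j) * sg 2 (x h j)) := by
      funext j; exact sg_four _
    rw [e, hadd, hPR (sg 2) (cg 2) (contDiff_sg 2) (contDiff_cg 2) h hpos i₀,
      hPR (cg 2) (sg 2) (contDiff_cg 2) (contDiff_sg 2) h hpos i₀]
  have hW2 : ∀ h : ℝ, 0 < h → W 2 h = 2 * (Ac 1 h * W 1 h) := by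
    intro h hpos
    simp only [hW, hAc, Nat.cast_ofNat, Nat.cast_one]
    rw [hRC2 h hpos, hRS2 h hpos]
    push_cast
    linear_combination ((-2 : ℂ) * (A h (fun j => sg 1 (x h j)) i₀ : ℂ)
      * (D h (fun j => sg 1 (x h j)) i₀ : ℂ)) * Complex.I_sq
  have hW3 : ∀ h : ℝ, 0 < h → W 3 h = Ac 1 h * W 2 h + Ac 2 h * W 1 h := by
    intro h hpos
    simp only [hW, hAc, Nat.cast_ofNat, Nat.cast_one]
    rw [hRC3 h hpos, hRS3 h hpos]
    push_cast
    linear_combination (-((A h (fun j => sg 1 (x h j)) i₀ : ℂ)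
        * (D h (fun j => sg 2 (x h j)) i₀ : ℂ)
      + (A h (fun j => sg 2 (x h j)) i₀ : ℂ)
        * (D h (fun j => sg 1 (x h j)) i₀ : ℂ))) * Complex.I_sq
  have hW4 : ∀ h : ℝ, 0 < h → W 4 h = 2 * (Ac 2 h * W 2 h) := by
    intro h hpos
    simp only [hW, hAc, Nat.cast_ofNat, Nat.cast_one]
    rw [hRC4 h hpos, hRS4 h hpos]
    push_cast
    linear_combination ((-2 : ℂ) * (A h (fun j => sg 2 (x h j)) i₀ : ℂ)
      * (D h (fun j => sg 2 (x h j)) i₀ : ℂ)) * Complex.I_sq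
  have hDelta : ∀ h : ℝ, 0 < h →
      2 * W 1 h * W 2 h * W 3 h - W 2 h ^ 3 - W 4 h * W 1 h ^ 2 = 0 := by
    intro h hpos
    rw [hW3 h hpos, hW4 h hpos, hW2 h hpos]
    ring
  -- Step C : boundedness facts
  have hO1 : ∀ f g : ℝ → ℂ, f =O[l] (fun _ => (1:ℝ)) → g =O[l] (fun _ => (1:ℝ)) →
      (fun h => f h * g h) =O[l] (fun _ => (1:ℝ)) := by
    intro f g hf hg
    simpa using hf.mul hg
  have hP1 : ∀ f g : ℝ → ℂ, f =O[l] (fun h : ℝ => h ^ (p+1)) → g =O[l] (fun _ => (1:ℝ)) →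
      (fun h => f h * g h) =O[l] (fun h : ℝ => h ^ (p+1)) := by
    intro f g hf hg
    simpa using hf.mul hg
  have hZO : ∀ k : ℕ, (fun h : ℝ => Z h ^ k) =O[l] (fun _ => (1:ℝ)) := by
    intro k
    apply Asymptotics.IsBigO.of_bound 1
    filter_upwards with h
    simp [norm_pow, hnormZ h]
  have hhpO : (fun h : ℝ => ((h:ℂ))^p) =O[l] (fun _ => (1:ℝ)) := by
    apply Asymptotics.IsBigO.of_bound 1
    filter_upwards [hsmall] with h hh
    rw [norm_pow]
    simp only [Complex.norm_real, Real.norm_eq_abs, abs_of_pos hh.1, norm_one, mul_one]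
    exact pow_le_one₀ (le_of_lt hh.1) hh.2
  have hhp1O : (fun h : ℝ => h ^ (p+1)) =O[l] (fun _ => (1:ℝ)) := by
    apply Asymptotics.IsBigO.of_bound 1
    filter_upwards [hsmall] with h hh
    rw [Real.norm_eq_abs, abs_pow, abs_of_pos hh.1]
    simpa using pow_le_one₀ (le_of_lt hh.1) hh.2
  have hconstO : ∀ w : ℂ, (fun _ : ℝ => w) =O[l] (fun _ => (1:ℝ)) :=
    fun w => isBigO_const_const w (by norm_num) l
  have hYO : ∀ k : ℕ, (fun h : ℝ => Y k h) =O[l] (fun _ => (1:ℝ)) := by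
    intro k
    simp only [hY]
    exact (((hZO k).const_mul_left _).add (hO1 _ _ hhpO ((hZO k).const_mul_left _)))
  have hWO : ∀ k : ℕ, (fun h : ℝ => W k h) =O[l] (fun _ => (1:ℝ)) := by
    intro k
    have := ((hbig k).trans hhp1O).add (hYO k)
    simpa using this
  -- the difference of the two cubic combinations
  have hT : (fun h : ℝ => (2 * W 1 h * W 2 h * W 3 h - W 2 h ^ 3 - W 4 h * W 1 h ^ 2)
      - (2 * Y 1 h * Y 2 h * Y 3 h - Y 2 h ^ 3 - Y 4 h * Y 1 h ^ 2))
      =O[l] (fun h : ℝ => h ^ (p+1)) := by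
    have e : (fun h : ℝ => (2 * W 1 h * W 2 h * W 3 h - W 2 h ^ 3 - W 4 h * W 1 h ^ 2)
        - (2 * Y 1 h * Y 2 h * Y 3 h - Y 2 h ^ 3 - Y 4 h * Y 1 h ^ 2))
        = fun h : ℝ =>
          (W 1 h - Y 1 h) * (2 * W 2 h * W 3 h - Y 4 h * (W 1 h + Y 1 h))
          + ((W 2 h - Y 2 h) * (2 * Y 1 h * W 3 h
              - (W 2 h * W 2 h + (W 2 h * Y 2 h + Y 2 h * Y 2 h)))
          + ((W 3 h - Y 3 h) * (2 * Y 1 h * Y 2 h)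
          + (W 4 h - Y 4 h) * (-(W 1 h * W 1 h)))) := by
      funext h; ring
    rw [e]
    refine (hP1 _ _ (hbig 1) ?_).add ((hP1 _ _ (hbig 2) ?_).add
      ((hP1 _ _ (hbig 3) ?_).add (hP1 _ _ (hbig 4) ?_)))
    · exact (hO1 _ _ ((hWO 2).const_mul_left 2) (hWO 3)).sub
        (hO1 _ _ (hYO 4) ((hWO 1).add (hYO 1)))
    · exact (hO1 _ _ ((hYO 1).const_mul_left 2) (hWO 3)).sub
        ((hO1 _ _ (hWO 2) (hWO 2)).add ((hO1 _ _ (hWO 2) (hYO 2)).add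
          (hO1 _ _ (hYO 2) (hYO 2))))
    · exact hO1 _ _ ((hYO 1).const_mul_left 2) (hYO 2)
    · exact (hO1 _ _ (hWO 1) (hWO 1)).neg_left
  -- the remainder term
  obtain ⟨Rem, hRem⟩ : ∃ R : ℝ → ℂ, R = fun h : ℝ =>
      ((h:ℂ)^p)^2 * Z h ^ 6 * (Complex.I * ((CD i₀:ℂ)^2 * (Complex.I^(p+1))^2
          * (-4 - 2*(4:ℂ)^(p+1) + 4*(3:ℂ)^(p+1) + 6*(2:ℂ)^(p+1)
            + 2*((2:ℂ)^(p+1)*(3:ℂ)^(p+1)) - 6*((2:ℂ)^(p+1))^2))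
        + (h:ℂ)^p * ((CD i₀:ℂ)^3 * (Complex.I^(p+1))^3
          * (-(4:ℂ)^(p+1) + 2*((2:ℂ)^(p+1)*(3:ℂ)^(p+1)) - ((2:ℂ)^(p+1))^3))) := ⟨_, rfl⟩
  have hsq : (fun h : ℝ => ((h:ℂ)^p)^2) =O[l] (fun h : ℝ => h ^ (p+1)) := by
    apply Asymptotics.IsBigO.of_bound 1
    filter_upwards [hsmall] with h hh
    rw [norm_pow, norm_pow, Complex.norm_real, Real.norm_eq_abs, abs_of_pos hh.1, ← pow_mul,
      Real.norm_eq_abs, abs_pow, abs_of_pos hh.1, one_mul]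
    exact pow_le_pow_of_le_one (le_of_lt hh.1) hh.2 (by omega)
  have hRemO : Rem =O[l] (fun h : ℝ => h ^ (p+1)) := by
    rw [hRem]
    exact hP1 _ _ (hP1 _ _ hsq (hZO 6))
      (((hconstO _).const_mul_left Complex.I).add (hO1 _ _ hhpO (hconstO _)))
  -- the leading term is O(h^(p+1))
  have hGeq : (fun h : ℝ => (h:ℂ)^p * ((CD i₀:ℂ) * (Complex.I^(p+1)
      * (Z h ^ 6 * ((4:ℂ)^(p+1) - 4*(3:ℂ)^(p+1) + 6*(2:ℂ)^(p+1) - 4)))))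
      =ᶠ[l] fun h : ℝ => -((2 * W 1 h * W 2 h * W 3 h - W 2 h ^ 3 - W 4 h * W 1 h ^ 2)
        - (2 * Y 1 h * Y 2 h * Y 3 h - Y 2 h ^ 3 - Y 4 h * Y 1 h ^ 2)) - Rem h := by
    filter_upwards [eventually_mem_nhdsWithin] with h hpos
    have hd := hDelta h hpos
    have ka := key_alg Complex.I (Z h) ((h:ℂ)^p) ((CD i₀ : ℝ):ℂ) (Complex.I^(p+1))
      ((2:ℂ)^(p+1)) ((3:ℂ)^(p+1)) ((4:ℂ)^(p+1)) Complex.I_sq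
    simp only [hY, hRem]
    linear_combination (norm := (push_cast; ring1)) hd - ka
  have hGO : (fun h : ℝ => (h:ℂ)^p * ((CD i₀:ℂ) * (Complex.I^(p+1)
      * (Z h ^ 6 * ((4:ℂ)^(p+1) - 4*(3:ℂ)^(p+1) + 6*(2:ℂ)^(p+1) - 4)))))
      =O[l] (fun h : ℝ => h ^ (p+1)) :=
    (hT.neg_left.sub hRemO).congr' hGeq.symm Filter.EventuallyEq.rfl
  -- final numeric contradiction
  set KR : ℝ := (4:ℝ)^(p+1) - 4*3^(p+1) + 6*2^(p+1) - 4 with hKRdef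
  have hKR : 0 < KR := Kpos (p+1) (by omega)
  have hKC : ((4:ℂ)^(p+1) - 4*(3:ℂ)^(p+1) + 6*(2:ℂ)^(p+1) - 4) = ((KR : ℝ) : ℂ) := by
    rw [hKRdef]; push_cast; ring
  obtain ⟨C, hC⟩ := hGO.bound
  have hM : 0 < |CD i₀| * KR := mul_pos (abs_pos.mpr hCD) hKR
  have hev : ∀ᶠ h : ℝ in l, h < (|CD i₀| * KR) / (|C| + 1) := by
    have hIoo : Set.Ioo (0:ℝ) ((|CD i₀| * KR) / (|C| + 1)) ∈ l :=
      Ioo_mem_nhdsGT_of_mem ⟨le_refl 0, by positivity⟩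
    filter_upwards [hIoo] with h hh
    exact hh.2
  obtain ⟨h, hh1, hhC, hhev⟩ := (hsmall.and (hC.and hev)).exists
  have h0 : 0 < h := hh1.1
  have hnorm : ‖(h:ℂ)^p * ((CD i₀:ℂ) * (Complex.I^(p+1)
      * (Z h ^ 6 * ((4:ℂ)^(p+1) - 4*(3:ℂ)^(p+1) + 6*(2:ℂ)^(p+1) - 4))))‖
      = h^p * (|CD i₀| * KR) := by
    rw [hKC]
    simp only [norm_mul, norm_pow, Complex.norm_real, Complex.norm_I, Real.norm_eq_abs, hnormZ]
    rw [abs_of_pos h0, abs_of_pos hKR]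
    ring
  rw [hnorm, Real.norm_eq_abs, abs_of_pos (pow_pos h0 (p+1))] at hhC
  have hdiv : h * (|C| + 1) < |CD i₀| * KR := by
    rw [← lt_div_iff₀ (by positivity)]
    exact hhev
  have ha := mul_lt_mul_of_pos_left hdiv (pow_pos h0 p)
  have hbnd := mul_le_mul_of_nonneg_right (le_abs_self C) (le_of_lt (pow_pos h0 (p+1)))
  have hple : h^(p+1) = h^p * h := pow_succ h p
  nlinarith [ha, hbnd, hhC, pow_pos h0 p, h0, mul_pos (pow_pos h0 p) h0]
end

section
/- If D is a linear discrete derivative operator of order of accuracy p > 2, then there exists no general averaging operator A_{f'} of any order q ∈ ℕ such that the chain rule D(f(u)) = (A_{f'} u) · (Du) holds for all smooth functions f and grid functions u. -/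
open Asymptotics Topology Filter Real

namespace NoChainRuleAux

/-! ### Combinatorial positivity -/

noncomputable def Sval (n : ℕ) : ℝ := 4 ^ n - 4 * 3 ^ n + 6 * 2 ^ n - 4

lemma Sval_pos {n : ℕ} (hn : 4 ≤ n) : 0 < Sval n := by
  induction n, hn using Nat.le_induction with
  | base => norm_num [Sval]
  | succ n hn ih =>
    have h2 : (16 : ℝ) ≤ 2 ^ n := by
      calc (16:ℝ) = 2 ^ 4 := by norm_num
      _ ≤ 2 ^ n := by apply pow_le_pow_right₀ (by norm_num) hn
    have hq : (0:ℝ) ≤ (2 ^ n - 2) * (2 ^ n - 4) := by nlinarith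
    have h4 : (4:ℝ) ^ n = 2 ^ n * 2 ^ n := by
      rw [show (4:ℝ) = 2 * 2 by norm_num, mul_pow]
    have hrec : Sval (n+1) = 3 * Sval n + (2 ^ n - 2) * (2 ^ n - 4) := by
      simp only [Sval, pow_succ, h4]; ring
    nlinarith [ih]

/-! ### Trig calculus -/

lemma cd_cos (a : ℝ) : ContDiff ℝ (⊤ : ℕ∞) fun y : ℝ => Real.cos (a * y) :=
  Real.contDiff_cos.comp (contDiff_const.mul contDiff_id)
lemma cd_sin (a : ℝ) : ContDiff ℝ (⊤ : ℕ∞) fun y : ℝ => Real.sin (a * y) :=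
  Real.contDiff_sin.comp (contDiff_const.mul contDiff_id)

lemma iter_cos (a θ : ℝ) (m : ℕ) :
    iteratedDeriv m (fun y : ℝ => Real.cos (a * y + θ))
      = fun y : ℝ => a ^ m * Real.cos (a * y + (θ + m * (π / 2))) := by
  induction m with
  | zero => simp
  | succ m ih =>
    rw [iteratedDeriv_succ, ih]
    funext y
    have h1 : HasDerivAt (fun y : ℝ => a * y + (θ + m * (π / 2))) a y := by
      simpa using ((hasDerivAt_id y).const_mul a).add_const (θ + m * (π / 2))
    have h2 : HasDerivAt (fun y : ℝ => Real.cos (a * y + (θ + m * (π / 2))))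
        (-Real.sin (a * y + (θ + m * (π / 2))) * a) y :=
      (Real.hasDerivAt_cos _).comp y h1
    have h3 := (h2.const_mul (a ^ m)).deriv
    rw [h3]
    rw [show a * y + (θ + (m + 1 : ℕ) * (π / 2))
        = (a * y + (θ + m * (π / 2))) + π / 2 by push_cast; ring,
      Real.cos_add_pi_div_two]
    ring

lemma sin_eq_cos_shift (a : ℝ) :
    (fun y : ℝ => Real.sin (a * y)) = fun y : ℝ => Real.cos (a * y + -(π / 2)) := by
  funext y
  rw [show a * y + -(π/2) = a * y - π/2 by ring, Real.cos_sub_pi_div_two]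

lemma cos_eq_cos_shift (a : ℝ) :
    (fun y : ℝ => Real.cos (a * y)) = fun y : ℝ => Real.cos (a * y + 0) := by
  funext y; rw [add_zero]

lemma exp_pi_div_two : Complex.exp ((π/2 : ℝ) * Complex.I) = Complex.I := by
  rw [Complex.exp_mul_I, ← Complex.ofReal_cos, ← Complex.ofReal_sin]
  simp

lemma key_exp (a y : ℝ) (m : ℕ) :
    ((a : ℂ) * Complex.I) ^ m * Complex.exp ((a * y : ℝ) * Complex.I)
      = ((a ^ m * Real.cos (a * y + (0 + m * (π / 2))) : ℝ) : ℂ)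
        + ((a ^ m * Real.cos (a * y + (-(π / 2) + m * (π / 2))) : ℝ) : ℂ) * Complex.I := by
  have hsin : Real.cos (a * y + (-(π / 2) + m * (π / 2))) = Real.sin (a * y + m * (π/2)) := by
    rw [show a * y + (-(π / 2) + m * (π / 2)) = (a * y + m * (π/2)) - π/2 by ring,
      Real.cos_sub_pi_div_two]
  rw [hsin, show a * y + (0 + m * (π/2)) = a * y + m * (π/2) by ring]
  have hrhs : ((a ^ m * Real.cos (a * y + m * (π/2)) : ℝ) : ℂ)
      + ((a ^ m * Real.sin (a * y + m * (π/2)) : ℝ) : ℂ) * Complex.I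
      = (a : ℂ) ^ m * Complex.exp (((a * y + m * (π/2) : ℝ)) * Complex.I) := by
    rw [Complex.exp_mul_I, ← Complex.ofReal_cos, ← Complex.ofReal_sin]
    push_cast
    ring
  rw [hrhs, show ((a * y + m * (π/2) : ℝ) : ℂ) = ((a*y:ℝ):ℂ) + (m:ℂ) * ((π/2:ℝ):ℂ)
    by push_cast; ring]
  rw [add_mul, Complex.exp_add, mul_assoc ((m:ℂ)) _ _]
  rw [Complex.exp_nat_mul, exp_pi_div_two]
  rw [mul_pow]
  ring

/-! ### Main definitions -/

noncomputable def dd (x : ℝ → ℤ → ℝ) (D : ℝ → (ℤ → ℝ) → ℤ → ℝ) (i₀ : ℤ) (k : ℕ) (h : ℝ) : ℂ :=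
  ((D h (fun j => Real.cos ((k:ℝ) * x h j)) i₀ : ℝ) : ℂ)
  + ((D h (fun j => Real.sin ((k:ℝ) * x h j)) i₀ : ℝ) : ℂ) * Complex.I

noncomputable def ee (x : ℝ → ℤ → ℝ) (i₀ : ℤ) (h : ℝ) : ℂ :=
  Complex.exp (((x h i₀ : ℝ) : ℂ) * Complex.I)

noncomputable def aa (x : ℝ → ℤ → ℝ) (i₀ : ℤ) (k : ℕ) (h : ℝ) : ℂ :=
  (k:ℂ) * Complex.I * (ee x i₀ h) ^ k

noncomputable def bb (x : ℝ → ℤ → ℝ) (CD : ℤ → ℝ) (i₀ : ℤ) (p : ℕ) (k : ℕ) (h : ℝ) : ℂ :=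
  ((k:ℂ) * Complex.I) ^ (p+1) * (ee x i₀ h) ^ k * ((CD i₀ : ℝ) : ℂ)

noncomputable def eps (x : ℝ → ℤ → ℝ) (D : ℝ → (ℤ → ℝ) → ℤ → ℝ) (CD : ℤ → ℝ) (i₀ : ℤ)
    (p : ℕ) (k : ℕ) (h : ℝ) : ℂ :=
  dd x D i₀ k h - aa x i₀ k h - bb x CD i₀ p k h * (h:ℂ) ^ p

lemma ee_pow (x : ℝ → ℤ → ℝ) (i₀ : ℤ) (k : ℕ) (h : ℝ) :
    (ee x i₀ h) ^ k = Complex.exp ((((k:ℝ) * x h i₀ : ℝ) : ℂ) * Complex.I) := by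
  rw [ee, ← Complex.exp_nat_mul]
  congr 1
  push_cast
  ring

/-! ### The asymptotic expansion of `dd` -/

lemma eps_isBigO (x : ℝ → ℤ → ℝ) (D : ℝ → (ℤ → ℝ) → ℤ → ℝ) (CD : ℤ → ℝ) (i₀ : ℤ) (p : ℕ)
    (hD : ∀ u : ℝ → ℝ, ContDiff ℝ (⊤ : ℕ∞) u →
      (fun h : ℝ => D h (fun j => u (x h j)) i₀ - deriv u (x h i₀)
          - iteratedDeriv (p + 1) u (x h i₀) * CD i₀ * h ^ p)
        =O[𝓝[>] (0:ℝ)] fun h : ℝ => h ^ (p + 1)) (k : ℕ) :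
    eps x D CD i₀ p k =O[𝓝[>] (0:ℝ)] fun h : ℝ => h ^ (p + 1) := by
  have hcos := hD (fun y => Real.cos ((k:ℝ) * y)) (cd_cos (k:ℝ))
  have hsin := hD (fun y => Real.sin ((k:ℝ) * y)) (cd_sin (k:ℝ))
  have hd1 : deriv (fun y : ℝ => Real.cos ((k:ℝ) * y))
      = fun y : ℝ => (k:ℝ) ^ 1 * Real.cos ((k:ℝ) * y + (0 + 1 * (π / 2))) := by
    rw [cos_eq_cos_shift (k:ℝ), ← iteratedDeriv_one, iter_cos (k:ℝ) 0 1]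
    push_cast; rfl
  have hdn : iteratedDeriv (p+1) (fun y : ℝ => Real.cos ((k:ℝ) * y))
      = fun y : ℝ => (k:ℝ) ^ (p+1) * Real.cos ((k:ℝ) * y + (0 + (p+1) * (π / 2))) := by
    rw [cos_eq_cos_shift (k:ℝ), iter_cos (k:ℝ) 0 (p+1)]; push_cast; rfl
  have hs1 : deriv (fun y : ℝ => Real.sin ((k:ℝ) * y))
      = fun y : ℝ => (k:ℝ) ^ 1 * Real.cos ((k:ℝ) * y + (-(π/2) + 1 * (π / 2))) := by
    rw [sin_eq_cos_shift (k:ℝ), ← iteratedDeriv_one, iter_cos (k:ℝ) (-(π/2)) 1]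
    push_cast; rfl
  have hsn : iteratedDeriv (p+1) (fun y : ℝ => Real.sin ((k:ℝ) * y))
      = fun y : ℝ => (k:ℝ) ^ (p+1) * Real.cos ((k:ℝ) * y + (-(π/2) + (p+1) * (π / 2))) := by
    rw [sin_eq_cos_shift (k:ℝ), iter_cos (k:ℝ) (-(π/2)) (p+1)]; push_cast; rfl
  rw [hd1, hdn] at hcos
  rw [hs1, hsn] at hsin
  have hcosC : (fun h : ℝ => ((D h (fun j => Real.cos ((k:ℝ) * x h j)) i₀
        - (k:ℝ) ^ 1 * Real.cos ((k:ℝ) * x h i₀ + (0 + 1 * (π / 2)))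
        - (k:ℝ) ^ (p+1) * Real.cos ((k:ℝ) * x h i₀ + (0 + (p+1) * (π / 2))) * CD i₀ * h ^ p : ℝ) : ℂ))
      =O[𝓝[>] (0:ℝ)] fun h : ℝ => h ^ (p + 1) := by
    rw [isBigO_iff] at hcos ⊢
    obtain ⟨c, hc⟩ := hcos
    exact ⟨c, hc.mono fun h hh => by rw [Complex.norm_real]; exact hh⟩
  have hsinC : (fun h : ℝ => ((D h (fun j => Real.sin ((k:ℝ) * x h j)) i₀
        - (k:ℝ) ^ 1 * Real.cos ((k:ℝ) * x h i₀ + (-(π/2) + 1 * (π / 2)))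
        - (k:ℝ) ^ (p+1) * Real.cos ((k:ℝ) * x h i₀ + (-(π/2) + (p+1) * (π / 2))) * CD i₀ * h ^ p : ℝ) : ℂ)
        * Complex.I)
      =O[𝓝[>] (0:ℝ)] fun h : ℝ => h ^ (p + 1) := by
    rw [isBigO_iff] at hsin ⊢
    obtain ⟨c, hc⟩ := hsin
    refine ⟨c, hc.mono fun h hh => ?_⟩
    rw [norm_mul, Complex.norm_real, Complex.norm_I, mul_one]
    exact hh
  have hsum := hcosC.add hsinC
  refine hsum.congr' (Filter.Eventually.of_forall fun h => ?_)
    (Filter.Eventually.of_forall fun _ => rfl)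
  have hk1 := key_exp (k:ℝ) (x h i₀) 1
  have hkn := key_exp (k:ℝ) (x h i₀) (p+1)
  rw [pow_one] at hk1
  simp only [eps, dd, aa, bb, ee_pow]
  push_cast at hk1 hkn ⊢
  linear_combination hk1 + ((CD i₀ : ℂ) * (h:ℂ)^p) * hkn

/-! ### Pointwise trig identities for the squared combination -/

lemma ptwise_re (t : ℂ) (y : ℝ) :
    (Real.cos (2*y) + t.re * Real.cos y - t.im * Real.sin y)^2
      - (Real.sin (2*y) + t.re * Real.sin y + t.im * Real.cos y)^2
      = Real.cos (4*y) + (2*t).re * Real.cos (3*y) - (2*t).im * Real.sin (3*y)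
        + (t*t).re * Real.cos (2*y) - (t*t).im * Real.sin (2*y) := by
  have h4 : (4:ℝ)*y = 2*(2*y) := by ring
  have h3 : (3:ℝ)*y = 2*y + y := by ring
  rw [h4, h3, Real.cos_add, Real.sin_add, Real.cos_two_mul' (2*y),
    Real.cos_two_mul' y, Real.sin_two_mul y]
  simp only [Complex.mul_re, Complex.mul_im, Complex.re_ofNat, Complex.im_ofNat]
  ring

lemma ptwise_im (t : ℂ) (y : ℝ) :
    2 * ((Real.cos (2*y) + t.re * Real.cos y - t.im * Real.sin y)
      * (Real.sin (2*y) + t.re * Real.sin y + t.im * Real.cos y))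
      = Real.sin (4*y) + (2*t).re * Real.sin (3*y) + (2*t).im * Real.cos (3*y)
        + (t*t).re * Real.sin (2*y) + (t*t).im * Real.cos (2*y) := by
  have h4 : (4:ℝ)*y = 2*(2*y) := by ring
  have h3 : (3:ℝ)*y = 2*y + y := by ring
  rw [h4, h3, Real.cos_add, Real.sin_add, Real.sin_two_mul (2*y),
    Real.cos_two_mul' y, Real.sin_two_mul y]
  simp only [Complex.mul_re, Complex.mul_im, Complex.re_ofNat, Complex.im_ofNat]
  ring

lemma dd_chain_identity
    (x : ℝ → ℤ → ℝ) (D : ℝ → (ℤ → ℝ) → ℤ → ℝ) (i₀ : ℤ)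
    (hDlin : ∀ h : ℝ, IsLinearMap ℝ (D h))
    (A : (ℝ → ℝ) → ℝ → (ℤ → ℝ) → ℤ → ℝ)
    (hchain : ∀ f : ℝ → ℝ, ContDiff ℝ (⊤ : ℕ∞) f → ∀ u : ℝ → ℝ, ContDiff ℝ (⊤ : ℕ∞) u →
        ∀ h : ℝ, 0 < h → ∀ i : ℤ,
          D h (fun j => f (u (x h j))) i
            = A f h (fun j => u (x h j)) i * D h (fun j => u (x h j)) i)
    (h : ℝ) (hh : 0 < h) :
    (dd x D i₀ 1 h)^2 * dd x D i₀ 4 h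
      - 2 * dd x D i₀ 1 h * dd x D i₀ 2 h * dd x D i₀ 3 h
      + (dd x D i₀ 2 h)^3 = 0 := by
  set ℓ : (ℤ → ℝ) →ₗ[ℝ] ℝ :=
    (LinearMap.proj i₀).comp (IsLinearMap.mk' (D h) (hDlin h)) with hℓdef
  have hDval : ∀ g : ℤ → ℝ, ℓ g = D h g i₀ := fun g => rfl
  have hsq : ∀ u : ℝ → ℝ, ContDiff ℝ (⊤ : ℕ∞) u → D h (fun j => u (x h j)) i₀ = 0 →
      D h (fun j => (u (x h j))^2) i₀ = 0 := by
    intro u hu h0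
    have hc := hchain (fun y => y^2) (contDiff_id.pow 2) u hu h hh i₀
    rw [h0, mul_zero] at hc
    exact hc
  have hmul : ∀ u v : ℝ → ℝ, ContDiff ℝ (⊤ : ℕ∞) u → ContDiff ℝ (⊤ : ℕ∞) v →
      D h (fun j => u (x h j)) i₀ = 0 → D h (fun j => v (x h j)) i₀ = 0 →
      D h (fun j => u (x h j) * v (x h j)) i₀ = 0 := by
    intro u v hu hv h0u h0v
    have hw : D h (fun j => (fun y => u y + v y) (x h j)) i₀ = 0 := by
      show ℓ (fun j => u (x h j) + v (x h j)) = 0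
      have hident : (fun j => u (x h j) + v (x h j))
          = (fun j => u (x h j)) + (fun j => v (x h j)) := rfl
      rw [hident, map_add]
      show D h _ i₀ + D h _ i₀ = 0
      rw [h0u, h0v, add_zero]
    have hsqw := hsq (fun y => u y + v y) (hu.add hv) hw
    have hsqu := hsq u hu h0u
    have hsqv := hsq v hv h0v
    have hident2 : (fun j => u (x h j) * v (x h j))
        = (2⁻¹:ℝ) • ((fun j => ((fun y => u y + v y) (x h j))^2)
            - (fun j => (u (x h j))^2) - (fun j => (v (x h j))^2)) := by
      funext j
      simp only [Pi.smul_apply, Pi.sub_apply, smul_eq_mul]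
      ring
    show ℓ _ = 0
    rw [hident2, map_smul, map_sub, map_sub]
    show (2⁻¹:ℝ) • (D h _ i₀ - D h _ i₀ - D h _ i₀) = 0
    rw [hsqw, hsqu, hsqv]
    simp
  -- normalize the casts in dd
  have hdd1 : dd x D i₀ 1 h
      = ((D h (fun j => Real.cos (x h j)) i₀ : ℝ) : ℂ)
        + ((D h (fun j => Real.sin (x h j)) i₀ : ℝ) : ℂ) * Complex.I := by
    simp only [dd, Nat.cast_one, one_mul]
  have hdd2 : dd x D i₀ 2 h
      = ((D h (fun j => Real.cos (2 * x h j)) i₀ : ℝ) : ℂ)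
        + ((D h (fun j => Real.sin (2 * x h j)) i₀ : ℝ) : ℂ) * Complex.I := by
    simp only [dd, Nat.cast_ofNat]
  have hdd3 : dd x D i₀ 3 h
      = ((D h (fun j => Real.cos (3 * x h j)) i₀ : ℝ) : ℂ)
        + ((D h (fun j => Real.sin (3 * x h j)) i₀ : ℝ) : ℂ) * Complex.I := by
    simp only [dd, Nat.cast_ofNat]
  have hdd4 : dd x D i₀ 4 h
      = ((D h (fun j => Real.cos (4 * x h j)) i₀ : ℝ) : ℂ)
        + ((D h (fun j => Real.sin (4 * x h j)) i₀ : ℝ) : ℂ) * Complex.I := by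
    simp only [dd, Nat.cast_ofNat]
  rw [hdd1, hdd2, hdd3, hdd4]
  set c1 := D h (fun j => Real.cos (x h j)) i₀ with hc1d
  set s1 := D h (fun j => Real.sin (x h j)) i₀ with hs1d
  set c2 := D h (fun j => Real.cos (2 * x h j)) i₀ with hc2d
  set s2 := D h (fun j => Real.sin (2 * x h j)) i₀ with hs2d
  set c3 := D h (fun j => Real.cos (3 * x h j)) i₀ with hc3d
  set s3 := D h (fun j => Real.sin (3 * x h j)) i₀ with hs3d
  set c4 := D h (fun j => Real.cos (4 * x h j)) i₀ with hc4d
  set s4 := D h (fun j => Real.sin (4 * x h j)) i₀ with hs4d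
  by_cases hd1 : ((c1 : ℂ) + (s1 : ℂ) * Complex.I) = 0
  · -- degenerate case : dd1 = 0
    have hz : c1 = 0 ∧ s1 = 0 := by
      rw [Complex.ext_iff] at hd1
      simpa using hd1
    have hcc := hmul _ _ Real.contDiff_cos Real.contDiff_cos hz.1 hz.1
    have hss := hmul _ _ Real.contDiff_sin Real.contDiff_sin hz.2 hz.2
    have hcs := hmul _ _ Real.contDiff_cos Real.contDiff_sin hz.1 hz.2
    have hc2z : c2 = 0 := by
      rw [hc2d]
      show ℓ _ = 0
      have : (fun j => Real.cos (2 * x h j))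
          = (fun j => Real.cos (x h j) * Real.cos (x h j))
            - (fun j => Real.sin (x h j) * Real.sin (x h j)) := by
        funext j
        simp only [Pi.sub_apply]
        rw [Real.cos_two_mul']
        ring
      rw [this, map_sub]
      show D h _ i₀ - D h _ i₀ = 0
      rw [hcc, hss, sub_zero]
    have hs2z : s2 = 0 := by
      rw [hs2d]
      show ℓ _ = 0
      have : (fun j => Real.sin (2 * x h j))
          = (2:ℝ) • (fun j => Real.cos (x h j) * Real.sin (x h j)) := by
        funext j
        simp only [Pi.smul_apply, smul_eq_mul]
        rw [Real.sin_two_mul]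
        ring
      rw [this, map_smul]
      show (2:ℝ) • D h _ i₀ = 0
      rw [hcs, smul_zero]
    rw [hd1, hc2z, hs2z]
    push_cast
    ring
  · -- main case
    set d1 : ℂ := (c1 : ℂ) + (s1 : ℂ) * Complex.I with hd1d
    set d2 : ℂ := (c2 : ℂ) + (s2 : ℂ) * Complex.I with hd2d
    set t : ℂ := -(d2 / d1) with htd
    have htd1 : d2 + t * d1 = 0 := by
      rw [htd]
      field_simp
      ring
    set u1 : ℝ → ℝ := fun y => Real.cos (2*y) + t.re * Real.cos y - t.im * Real.sin y
      with hu1d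
    set u2 : ℝ → ℝ := fun y => Real.sin (2*y) + t.re * Real.sin y + t.im * Real.cos y
      with hu2d
    have hu1smooth : ContDiff ℝ (⊤ : ℕ∞) u1 :=
      ((cd_cos 2).add (contDiff_const.mul Real.contDiff_cos)).sub
        (contDiff_const.mul Real.contDiff_sin)
    have hu2smooth : ContDiff ℝ (⊤ : ℕ∞) u2 :=
      ((cd_sin 2).add (contDiff_const.mul Real.contDiff_sin)).add
        (contDiff_const.mul Real.contDiff_cos)
    have hDu1 : D h (fun j => u1 (x h j)) i₀ = 0 := by
      show ℓ _ = 0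
      have hident : (fun j => u1 (x h j))
          = ((fun j => Real.cos (2 * x h j))
              + t.re • (fun j => Real.cos (x h j))
              - t.im • (fun j => Real.sin (x h j))) := by
        funext j
        simp only [Pi.add_apply, Pi.sub_apply, Pi.smul_apply, smul_eq_mul, hu1d]
      rw [hident, map_sub, map_add, map_smul, map_smul]
      simp only [hDval, ← hc2d, ← hc1d, ← hs1d, smul_eq_mul]
      have hre := congrArg Complex.re htd1
      simp only [hd2d, hd1d, Complex.add_re, Complex.mul_re, Complex.ofReal_re,
        Complex.ofReal_im, Complex.I_re, Complex.I_im, Complex.add_im, Complex.mul_im,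
        Complex.zero_re] at hre
      linarith
    have hDu2 : D h (fun j => u2 (x h j)) i₀ = 0 := by
      show ℓ _ = 0
      have hident : (fun j => u2 (x h j))
          = ((fun j => Real.sin (2 * x h j))
              + t.re • (fun j => Real.sin (x h j))
              + t.im • (fun j => Real.cos (x h j))) := by
        funext j
        simp only [Pi.add_apply, Pi.smul_apply, smul_eq_mul, hu2d]
      rw [hident, map_add, map_add, map_smul, map_smul]
      simp only [hDval, ← hs2d, ← hc1d, ← hs1d, smul_eq_mul]
      have him := congrArg Complex.im htd1
      simp only [hd2d, hd1d, Complex.add_re, Complex.mul_re, Complex.ofReal_re,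
        Complex.ofReal_im, Complex.I_re, Complex.I_im, Complex.add_im, Complex.mul_im,
        Complex.zero_im] at him
      linarith
    have hsq1 := hsq u1 hu1smooth hDu1
    have hsq2 := hsq u2 hu2smooth hDu2
    have hmul12 := hmul u1 u2 hu1smooth hu2smooth hDu1 hDu2
    -- real part relation
    have hreRel : c4 + (2*t).re * c3 - (2*t).im * s3 + (t*t).re * c2 - (t*t).im * s2 = 0 := by
      have hident : ((fun j => Real.cos (4 * x h j))
            + (2*t).re • (fun j => Real.cos (3 * x h j))
            - (2*t).im • (fun j => Real.sin (3 * x h j))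
            + (t*t).re • (fun j => Real.cos (2 * x h j))
            - (t*t).im • (fun j => Real.sin (2 * x h j)))
          = (fun j => (u1 (x h j))^2) - (fun j => (u2 (x h j))^2) := by
        funext j
        simp only [Pi.add_apply, Pi.sub_apply, Pi.smul_apply, smul_eq_mul, hu1d, hu2d]
        have := ptwise_re t (x h j)
        linarith
      have happ := congrArg ℓ hident
      simp only [map_sub, map_add, map_smul] at happ
      simp only [hDval] at happ
      rw [hsq1, hsq2] at happ
      simp only [← hc4d, ← hc3d, ← hs3d, ← hc2d, ← hs2d, smul_eq_mul] at happ
      linarith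
    have himRel : s4 + (2*t).re * s3 + (2*t).im * c3 + (t*t).re * s2 + (t*t).im * c2 = 0 := by
      have hident : ((fun j => Real.sin (4 * x h j))
            + (2*t).re • (fun j => Real.sin (3 * x h j))
            + (2*t).im • (fun j => Real.cos (3 * x h j))
            + (t*t).re • (fun j => Real.sin (2 * x h j))
            + (t*t).im • (fun j => Real.cos (2 * x h j)))
          = (2:ℝ) • (fun j => u1 (x h j) * u2 (x h j)) := by
        funext j
        simp only [Pi.add_apply, Pi.smul_apply, smul_eq_mul, hu1d, hu2d]
        have := ptwise_im t (x h j)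
        linarith
      have happ := congrArg ℓ hident
      simp only [map_add, map_smul] at happ
      simp only [hDval] at happ
      rw [hmul12] at happ
      simp only [← hs4d, ← hs3d, ← hc3d, ← hs2d, ← hc2d, smul_eq_mul] at happ
      linarith
    -- assemble into a complex relation
    set d3 : ℂ := (c3 : ℂ) + (s3 : ℂ) * Complex.I with hd3d
    set d4 : ℂ := (c4 : ℂ) + (s4 : ℂ) * Complex.I with hd4d
    have hcomb : d4 + 2 * t * d3 + (t * t) * d2 = 0 := by
      have H1 := hreRel
      have H2 := himRel
      simp only [Complex.mul_re, Complex.mul_im, Complex.re_ofNat, Complex.im_ofNat] at H1 H2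
      rw [Complex.ext_iff]
      constructor
      · simp only [hd4d, hd3d, hd2d, Complex.add_re, Complex.add_im, Complex.mul_re,
          Complex.mul_im, Complex.ofReal_re, Complex.ofReal_im, Complex.I_re, Complex.I_im,
          Complex.re_ofNat, Complex.im_ofNat, Complex.zero_re, Complex.zero_im]
        linear_combination H1
      · simp only [hd4d, hd3d, hd2d, Complex.add_re, Complex.add_im, Complex.mul_re,
          Complex.mul_im, Complex.ofReal_re, Complex.ofReal_im, Complex.I_re, Complex.I_im,
          Complex.re_ofNat, Complex.im_ofNat, Complex.zero_re, Complex.zero_im]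
        linear_combination H2
    show d1^2 * d4 - 2 * d1 * d2 * d3 + d2^3 = 0
    linear_combination d1^2 * hcomb + (-2*d1*d3 + d2*(d2 - t*d1)) * htd1

lemma final_contradiction
    (p : ℕ) (hp : 2 < p)
    (x : ℝ → ℤ → ℝ) (D : ℝ → (ℤ → ℝ) → ℤ → ℝ) (CD : ℤ → ℝ) (i₀ : ℤ) (hCD : CD i₀ ≠ 0)
    (heps : ∀ k : ℕ, eps x D CD i₀ p k =O[𝓝[>] (0:ℝ)] fun h : ℝ => h ^ (p+1))
    (hZ : ∀ h : ℝ, 0 < h →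
      (dd x D i₀ 1 h)^2 * dd x D i₀ 4 h
        - 2 * dd x D i₀ 1 h * dd x D i₀ 2 h * dd x D i₀ 3 h
        + (dd x D i₀ 2 h)^3 = 0) : False := by
  have hmem1 : ∀ᶠ h in 𝓝[>] (0:ℝ), 0 < h ∧ h < 1 :=
    Filter.eventually_of_mem (Ioo_mem_nhdsGT_of_mem (by norm_num : (0:ℝ) ∈ Set.Ico 0 1))
      (fun h hh => hh)
  have hee : ∀ h : ℝ, ‖ee x i₀ h‖ = 1 := fun h => Complex.norm_exp_ofReal_mul_I _
  -- basic O facts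
  have hp1 : (fun h : ℝ => h^(p+1)) =O[𝓝[>] (0:ℝ)] (fun h : ℝ => h^p) := by
    apply IsBigO.of_bound 1
    refine hmem1.mono fun h ⟨h0, h1⟩ => ?_
    rw [Real.norm_eq_abs, Real.norm_eq_abs, abs_pow, abs_pow, one_mul]
    exact pow_le_pow_of_le_one (abs_nonneg h) (by rw [abs_of_pos h0]; linarith) (Nat.le_succ p)
  have hpO1 : (fun h : ℝ => h^p) =O[𝓝[>] (0:ℝ)] (fun _ : ℝ => (1:ℝ)) := by
    apply IsBigO.of_bound 1
    refine hmem1.mono fun h ⟨h0, h1⟩ => ?_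
    rw [Real.norm_eq_abs, abs_pow, norm_one, mul_one, abs_of_pos h0]
    exact pow_le_one₀ (le_of_lt h0) (le_of_lt h1)
  have hbbO : ∀ k : ℕ, (fun h : ℝ => bb x CD i₀ p k h * (h:ℂ)^p)
      =O[𝓝[>] (0:ℝ)] (fun h : ℝ => h^p) := by
    intro k
    apply IsBigO.of_bound ((k:ℝ)^(p+1) * |CD i₀|)
    apply Filter.Eventually.of_forall
    intro h
    simp only [bb, norm_mul, norm_pow, Complex.norm_I, Complex.norm_real, hee,
      Complex.norm_natCast, Real.norm_eq_abs, abs_pow, one_pow, mul_one]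
    exact le_rfl
  have hmm : ∀ k : ℕ, (fun h : ℝ => bb x CD i₀ p k h * (h:ℂ)^p + eps x D CD i₀ p k h)
      =O[𝓝[>] (0:ℝ)] (fun h : ℝ => h^p) := fun k => (hbbO k).add ((heps k).trans hp1)
  have hmm1 : ∀ k : ℕ, (fun h : ℝ => bb x CD i₀ p k h * (h:ℂ)^p + eps x D CD i₀ p k h)
      =O[𝓝[>] (0:ℝ)] (fun _ : ℝ => (1:ℝ)) := fun k => (hmm k).trans hpO1
  have haaO : ∀ k : ℕ, (aa x i₀ k) =O[𝓝[>] (0:ℝ)] (fun _ : ℝ => (1:ℝ)) := by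
    intro k
    apply IsBigO.of_bound (k:ℝ)
    apply Filter.Eventually.of_forall
    intro h
    simp only [aa, norm_mul, norm_pow, Complex.norm_I, hee, Complex.norm_natCast,
      one_pow, mul_one, norm_one]
    try exact le_rfl
  have h2p : (fun h : ℝ => (1:ℝ) * h^p * h^p) =O[𝓝[>] (0:ℝ)] (fun h : ℝ => h^(p+1)) := by
    apply IsBigO.of_bound 1
    refine hmem1.mono fun h ⟨h0, h1⟩ => ?_
    have hh : ‖(1:ℝ) * h^p * h^p‖ = h^(p+p) := by
      simp [Real.norm_eq_abs, abs_mul, abs_pow, abs_of_pos h0, pow_add]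
    rw [hh, Real.norm_eq_abs, abs_pow, abs_of_pos h0, one_mul]
    exact pow_le_pow_of_le_one (le_of_lt h0) (le_of_lt h1) (by omega)
  have htriv : (fun h : ℝ => (1:ℝ) * (1:ℝ) * h^(p+1)) =O[𝓝[>] (0:ℝ)]
      (fun h : ℝ => h^(p+1)) := by
    apply IsBigO.of_bound 1
    apply Filter.Eventually.of_forall
    intro h
    rw [one_mul, one_mul, one_mul]
  have hBigQ : ∀ (f g u : ℝ → ℂ), f =O[𝓝[>] (0:ℝ)] (fun _ : ℝ => (1:ℝ)) →
      g =O[𝓝[>] (0:ℝ)] (fun h : ℝ => h^p) → u =O[𝓝[>] (0:ℝ)] (fun h : ℝ => h^p) →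
      (fun h => f h * g h * u h) =O[𝓝[>] (0:ℝ)] (fun h : ℝ => h^(p+1)) :=
    fun f g u hf hg hu => ((hf.mul hg).mul hu).trans h2p
  have hBigL : ∀ (f g u : ℝ → ℂ), f =O[𝓝[>] (0:ℝ)] (fun _ : ℝ => (1:ℝ)) →
      g =O[𝓝[>] (0:ℝ)] (fun _ : ℝ => (1:ℝ)) → u =O[𝓝[>] (0:ℝ)] (fun h : ℝ => h^(p+1)) →
      (fun h => f h * g h * u h) =O[𝓝[>] (0:ℝ)] (fun h : ℝ => h^(p+1)) :=
    fun f g u hf hg hu => ((hf.mul hg).mul hu).trans htriv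
  -- the remainder function
  set A1 := aa x i₀ 1 with hA1
  set A2 := aa x i₀ 2 with hA2
  set A3 := aa x i₀ 3 with hA3
  set A4 := aa x i₀ 4 with hA4
  set E1 := eps x D CD i₀ p 1 with hE1
  set E2 := eps x D CD i₀ p 2 with hE2
  set E3 := eps x D CD i₀ p 3 with hE3
  set E4 := eps x D CD i₀ p 4 with hE4
  set M1 := fun h : ℝ => bb x CD i₀ p 1 h * (h:ℂ)^p + eps x D CD i₀ p 1 h with hM1
  set M2 := fun h : ℝ => bb x CD i₀ p 2 h * (h:ℂ)^p + eps x D CD i₀ p 2 h with hM2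
  set M3 := fun h : ℝ => bb x CD i₀ p 3 h * (h:ℂ)^p + eps x D CD i₀ p 3 h with hM3
  set M4 := fun h : ℝ => bb x CD i₀ p 4 h * (h:ℂ)^p + eps x D CD i₀ p 4 h with hM4
  set R : ℝ → ℂ := fun h =>
      (A1 h * A1 h * E4 h + (2 * A1 h) * A4 h * E1 h + (-2 * A2 h) * A3 h * E1 h
        + (-2 * A1 h) * A3 h * E2 h + (-2 * A1 h) * A2 h * E3 h + (3 * A2 h) * A2 h * E2 h)
      + ((2 * A1 h) * M1 h * M4 h + A4 h * M1 h * M1 h + M1 h * M1 h * M4 h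
        + (-2 * A1 h) * M2 h * M3 h + (-2 * A2 h) * M1 h * M3 h + (-2 * A3 h) * M1 h * M2 h
        + (-2 * M1 h) * M2 h * M3 h + (3 * A2 h) * M2 h * M2 h + M2 h * M2 h * M2 h)
    with hRdef
  have hR : R =O[𝓝[>] (0:ℝ)] (fun h : ℝ => h^(p+1)) := by
    apply IsBigO.add
    · apply IsBigO.add
      apply IsBigO.add
      apply IsBigO.add
      apply IsBigO.add
      apply IsBigO.add
      · exact hBigL _ _ _ (haaO 1) (haaO 1) (heps 4)
      · exact hBigL _ _ _ ((haaO 1).const_mul_left 2) (haaO 4) (heps 1)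
      · exact hBigL _ _ _ ((haaO 2).const_mul_left (-2)) (haaO 3) (heps 1)
      · exact hBigL _ _ _ ((haaO 1).const_mul_left (-2)) (haaO 3) (heps 2)
      · exact hBigL _ _ _ ((haaO 1).const_mul_left (-2)) (haaO 2) (heps 3)
      · exact hBigL _ _ _ ((haaO 2).const_mul_left 3) (haaO 2) (heps 2)
    · apply IsBigO.add
      apply IsBigO.add
      apply IsBigO.add
      apply IsBigO.add
      apply IsBigO.add
      apply IsBigO.add
      apply IsBigO.add
      apply IsBigO.add
      · exact hBigQ _ _ _ ((haaO 1).const_mul_left 2) (hmm 1) (hmm 4)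
      · exact hBigQ _ _ _ (haaO 4) (hmm 1) (hmm 1)
      · exact hBigQ _ _ _ (hmm1 1) (hmm 1) (hmm 4)
      · exact hBigQ _ _ _ ((haaO 1).const_mul_left (-2)) (hmm 2) (hmm 3)
      · exact hBigQ _ _ _ ((haaO 2).const_mul_left (-2)) (hmm 1) (hmm 3)
      · exact hBigQ _ _ _ ((haaO 3).const_mul_left (-2)) (hmm 1) (hmm 2)
      · exact hBigQ _ _ _ ((hmm1 1).const_mul_left (-2)) (hmm 2) (hmm 3)
      · exact hBigQ _ _ _ ((haaO 2).const_mul_left 3) (hmm 2) (hmm 2)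
      · exact hBigQ _ _ _ (hmm1 2) (hmm 2) (hmm 2)
  -- pointwise key identity
  have hSv : ((Sval (p+1) : ℝ) : ℂ) = 4^(p+1) - 4*3^(p+1) + 6*2^(p+1) - 4 := by
    simp only [Sval]
    push_cast
    ring
  have hkey : ∀ h : ℝ, 0 < h →
      Complex.I^(p+3) * (ee x i₀ h)^6 * ((CD i₀ : ℝ) : ℂ) * ((Sval (p+1) : ℝ) : ℂ) * (h:ℂ)^p
        = - R h := by
    intro h h0
    have hz := hZ h h0
    have hd : ∀ k : ℕ, dd x D i₀ k h
        = aa x i₀ k h + (bb x CD i₀ p k h * (h:ℂ)^p + eps x D CD i₀ p k h) := by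
      intro k
      simp only [eps]
      ring
    rw [hd 1, hd 2, hd 3, hd 4] at hz
    rw [hSv, hRdef]
    simp only [hA1, hA2, hA3, hA4, hE1, hE2, hE3, hE4, hM1, hM2, hM3, hM4] at hz ⊢
    simp only [aa, bb] at hz ⊢
    push_cast at hz ⊢
    linear_combination hz
  -- conclude
  have hT : (fun h : ℝ => Complex.I^(p+3) * (ee x i₀ h)^6 * ((CD i₀ : ℝ) : ℂ)
      * ((Sval (p+1) : ℝ) : ℂ) * (h:ℂ)^p) =O[𝓝[>] (0:ℝ)] (fun h : ℝ => h^(p+1)) := by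
    refine hR.neg_left.congr' ?_ (Filter.EventuallyEq.refl _ _)
    refine Filter.eventually_of_mem self_mem_nhdsWithin fun h h0 => ?_
    exact (hkey h h0).symm
  have hS : 0 < Sval (p+1) := Sval_pos (by omega)
  obtain ⟨c, hc⟩ := hT.bound
  set K : ℝ := |CD i₀| * Sval (p+1) with hK
  have hKpos : 0 < K := mul_pos (abs_pos.mpr hCD) hS
  set ε : ℝ := K / (max c 1 + 1) with hε
  have hmaxpos : 0 < max c 1 + 1 := by positivity
  have hεpos : 0 < ε := div_pos hKpos hmaxpos
  have hev : ∀ᶠ h in 𝓝[>] (0:ℝ), h ∈ Set.Ioo (0:ℝ) ε :=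
    Filter.eventually_of_mem (Ioo_mem_nhdsGT_of_mem (by constructor <;> [rfl; exact hεpos]
      : (0:ℝ) ∈ Set.Ico 0 ε)) (fun h hh => hh)
  obtain ⟨h, hch, hmem⟩ := (hc.and hev).exists
  obtain ⟨h0, hlt⟩ := hmem
  have hnormT : ‖Complex.I^(p+3) * (ee x i₀ h)^6 * ((CD i₀ : ℝ) : ℂ)
      * ((Sval (p+1) : ℝ) : ℂ) * (h:ℂ)^p‖ = K * h^p := by
    rw [hK]
    simp only [norm_mul, norm_pow, Complex.norm_I, Complex.norm_real, hee,
      Real.norm_eq_abs, abs_of_pos hS, abs_of_pos h0, one_pow]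
    ring
  rw [hnormT, Real.norm_eq_abs, abs_pow, abs_of_pos h0] at hch
  have hppos : (0:ℝ) < h^p := pow_pos h0 p
  have hch2 : K * h^p ≤ c * (h * h^p) := by
    rw [show h^(p+1) = h * h^p by rw [pow_succ]; ring] at hch
    exact hch
  have hKle : K ≤ c * h := by
    have := le_of_mul_le_mul_right (by linarith [hch2] : K * h^p ≤ (c * h) * h^p) hppos
    exact this
  have hcle : c * h ≤ max c 1 * h := by
    apply mul_le_mul_of_nonneg_right (le_max_left c 1) (le_of_lt h0)
  have hlast : max c 1 * h < K := by
    have h1 : max c 1 * h < max c 1 * ε :=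
      (mul_lt_mul_iff_right₀ (lt_of_lt_of_le one_pos (le_max_right c 1))).mpr hlt
    have h2 : max c 1 * ε < K := by
      rw [hε, ← mul_div_assoc, div_lt_iff₀ hmaxpos]
      nlinarith [hKpos]
    linarith
  linarith

end NoChainRuleAux


open Asymptotics Topology

/-- No discrete chain rule for derivative operators of order of accuracy `p > 2`:
if the family of linear difference operators `D h` admits the asymptotic expansion
`(D u)_i = u'(x_i) + u^{(p+1)}(x_i) C^D_i h^p + O(h^{p+1})` for every smooth `u`,
with `C^D` not identically zero, then there is no general averaging operator
`A_{f'}` of any order `q ∈ ℕ` (i.e. satisfying `(A_{f'} u)_i = f'(u(x_i)) + O(h^q)`)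
such that the chain rule `D(f(u)) = (A_{f'} u) · (Du)` holds for all smooth
functions `f` and smooth grid functions `u`. -/
theorem no_chain_rule_higher_order
    (p : ℕ) (hp : 2 < p)
    (x : ℝ → ℤ → ℝ)
    (hx : ∀ h : ℝ, 0 < h → ∀ i : ℤ, x h i < x h (i + 1))
    (D : ℝ → (ℤ → ℝ) → ℤ → ℝ)
    (hDlin : ∀ h : ℝ, IsLinearMap ℝ (D h))
    (CD : ℤ → ℝ) (i₀ : ℤ) (hCD : CD i₀ ≠ 0)
    (hD : ∀ u : ℝ → ℝ, ContDiff ℝ (⊤ : ℕ∞) u → ∀ i : ℤ,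
      (fun h : ℝ => D h (fun j => u (x h j)) i - deriv u (x h i)
          - iteratedDeriv (p + 1) u (x h i) * CD i * h ^ p)
        =O[𝓝[>] (0:ℝ)] fun h : ℝ => h ^ (p + 1)) :
    ¬ ∃ (q : ℕ) (A : (ℝ → ℝ) → ℝ → (ℤ → ℝ) → ℤ → ℝ),
      (∀ f : ℝ → ℝ, ContDiff ℝ (⊤ : ℕ∞) f → ∀ u : ℝ → ℝ, ContDiff ℝ (⊤ : ℕ∞) u → ∀ i : ℤ,
        (fun h : ℝ => A f h (fun j => u (x h j)) i - deriv f (u (x h i)))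
          =O[𝓝[>] (0:ℝ)] fun h : ℝ => h ^ q) ∧
      (∀ f : ℝ → ℝ, ContDiff ℝ (⊤ : ℕ∞) f → ∀ u : ℝ → ℝ, ContDiff ℝ (⊤ : ℕ∞) u →
        ∀ h : ℝ, 0 < h → ∀ i : ℤ,
          D h (fun j => f (u (x h j))) i
            = A f h (fun j => u (x h j)) i * D h (fun j => u (x h j)) i) := by
  rintro ⟨q, A, hA, hchain⟩
  exact NoChainRuleAux.final_contradiction p hp x D CD i₀ hCD
    (fun k => NoChainRuleAux.eps_isBigO x D CD i₀ p (fun u hu => hD u hu i₀) k)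
    (fun h hh => NoChainRuleAux.dd_chain_identity x D i₀ hDlin A hchain h hh)
end

section
/- The second order variable coefficient SBP operator on a bounded grid with ε₀ = 0 = ε_N is entropy dissipative: with norm matrix H = diag(1/2, 1, ..., 1, 1/2), interior stencil as in the periodic case, and boundary closures (D₂^ε u)₀ = ε₁(u₁ − u₀), (D₂^ε u)_N = −ε_{N-1}(u_N − u_{N-1}), one has Σ_{i=0}^N H_{ii} U'(u_i) · (D₂^ε u)_i = −Σ_{i=0}^{N-1} ((ε_i + ε_{i+1})/2)(U'(u_{i+1}) − U'(u_i)) · (u_{i+1} − u_i) ≤ 0 for every convex differentiable entropy U. -/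
open scoped RealInnerProductSpace
open Finset

lemma grad_mono_aux {m : ℕ} (U : EuclideanSpace ℝ (Fin m) → ℝ)
    (hU : ConvexOn ℝ Set.univ U) (hU' : Differentiable ℝ U)
    (x y : EuclideanSpace ℝ (Fin m)) :
    0 ≤ ⟪gradient U y - gradient U x, y - x⟫ := by
  set c : ℝ →ᵃ[ℝ] EuclideanSpace ℝ (Fin m) := AffineMap.lineMap x y with hc
  have hconv : ConvexOn ℝ Set.univ (U ∘ c) := by
    have := hU.comp_affineMap c
    simpa using this
  have hcder : ∀ t : ℝ, HasDerivAt (fun s : ℝ => c s) (y - x) t := by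
    intro t
    have h1 : HasDerivAt (fun s : ℝ => s • (y - x) + x) ((1:ℝ) • (y - x)) t :=
      ((hasDerivAt_id t).smul_const (y - x)).add_const x
    simp only [one_smul] at h1
    have : (fun s : ℝ => c s) = fun s : ℝ => s • (y - x) + x := by
      funext s; simp [hc, AffineMap.lineMap_apply]
    rw [this]; exact h1
  have hder : ∀ t : ℝ, HasDerivAt (U ∘ c) ⟪gradient U (c t), y - x⟫ t := by
    intro t
    have hg : HasGradientAt U (gradient U (c t)) (c t) :=
      (hU' (c t)).hasGradientAt
    have hf : HasFDerivAt U ((InnerProductSpace.toDual ℝ _) (gradient U (c t))) (c t) :=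
      (hasGradientAt_iff_hasFDerivAt.mp hg)
    have := hf.comp_hasDerivAt t (hcder t)
    simpa using this
  have hdiff : ∀ t ∈ (Set.univ : Set ℝ), DifferentiableAt ℝ (U ∘ c) t :=
    fun t _ => (hder t).differentiableAt
  have hmono := hconv.monotoneOn_deriv hdiff
  have h01 := hmono (Set.mem_univ (0:ℝ)) (Set.mem_univ (1:ℝ)) zero_le_one
  rw [(hder 0).deriv, (hder 1).deriv] at h01
  have hc0 : c 0 = x := by simp [hc]
  have hc1 : c 1 = y := by simp [hc]
  rw [hc0, hc1] at h01
  rw [inner_sub_left]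
  linarith

/-- The second order variable coefficient SBP operator on a bounded grid (uniform
spacing `h = 1`, nodes `0, …, N`) with `ε₀ = 0 = ε_N`, norm matrix
`H = diag(1/2, 1, …, 1, 1/2)`, interior stencil
`(D₂^ε u)_i = ((ε_i+ε_{i+1})/2) u_{i+1} - ((ε_{i-1}+2ε_i+ε_{i+1})/2) u_i
+ ((ε_{i-1}+ε_i)/2) u_{i-1}` and boundary closures `(D₂^ε u)₀ = ε₁(u₁ - u₀)`,
`(D₂^ε u)_N = -ε_{N-1}(u_N - u_{N-1})`, is entropy dissipative:
`∑_{i=0}^N H_{ii} U'(u_i) ⬝ (D₂^ε u)_i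
 = -∑_{i=0}^{N-1} ((ε_i+ε_{i+1})/2)(U'(u_{i+1}) - U'(u_i)) ⬝ (u_{i+1} - u_i) ≤ 0`
for every convex differentiable entropy `U`. -/
theorem sbp_variable_laplacian_entropy_dissipative
    (N m : ℕ) (hN : 3 ≤ N)
    (ε : ℕ → ℝ) (hε : ∀ i, 0 ≤ ε i) (hε0 : ε 0 = 0) (hεN : ε N = 0)
    (u : ℕ → EuclideanSpace ℝ (Fin m))
    (U : EuclideanSpace ℝ (Fin m) → ℝ)
    (hU : ConvexOn ℝ Set.univ U) (hU' : Differentiable ℝ U) :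
    (1 / 2) * ⟪gradient U (u 0), ε 1 • (u 1 - u 0)⟫
      + (∑ i ∈ Finset.Ico 1 N,
          ⟪gradient U (u i),
            ((ε i + ε (i + 1)) / 2) • u (i + 1)
              - ((ε (i - 1) + 2 * ε i + ε (i + 1)) / 2) • u i
              + ((ε (i - 1) + ε i) / 2) • u (i - 1)⟫)
      + (1 / 2) * ⟪gradient U (u N), (-ε (N - 1)) • (u N - u (N - 1))⟫
      = -∑ i ∈ Finset.range N, ((ε i + ε (i + 1)) / 2)
          * ⟪gradient U (u (i + 1)) - gradient U (u i), u (i + 1) - u i⟫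
    ∧ (1 / 2) * ⟪gradient U (u 0), ε 1 • (u 1 - u 0)⟫
      + (∑ i ∈ Finset.Ico 1 N,
          ⟪gradient U (u i),
            ((ε i + ε (i + 1)) / 2) • u (i + 1)
              - ((ε (i - 1) + 2 * ε i + ε (i + 1)) / 2) • u i
              + ((ε (i - 1) + ε i) / 2) • u (i - 1)⟫)
      + (1 / 2) * ⟪gradient U (u N), (-ε (N - 1)) • (u N - u (N - 1))⟫ ≤ 0 := by
  set w : ℕ → EuclideanSpace ℝ (Fin m) := fun i => gradient U (u i) with hw
  set a : ℕ → ℝ := fun i => (ε i + ε (i + 1)) / 2 with ha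
  set p : ℕ → ℝ := fun i => ⟪w i, u (i + 1) - u i⟫ with hp
  set q : ℕ → ℝ := fun i => ⟪w (i + 1), u (i + 1) - u i⟫ with hq
  have hN1 : 1 ≤ N := le_trans (by norm_num) hN
  -- rewrite interior terms
  have hint : ∀ i ∈ Finset.Ico 1 N,
      ⟪w i, ((ε i + ε (i + 1)) / 2) • u (i + 1)
          - ((ε (i - 1) + 2 * ε i + ε (i + 1)) / 2) • u i
          + ((ε (i - 1) + ε i) / 2) • u (i - 1)⟫
        = a i * p i - a (i - 1) * q (i - 1) := by
    intro i hi
    obtain ⟨j, rfl⟩ : ∃ j, i = j + 1 :=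
      ⟨i - 1, (Nat.succ_pred_eq_of_pos (Nat.lt_of_lt_of_le Nat.zero_lt_one (mem_Ico.mp hi).1)).symm⟩
    simp only [Nat.add_sub_cancel]
    have hvec : ((ε (j+1) + ε (j + 2)) / 2) • u (j + 2)
          - ((ε j + 2 * ε (j+1) + ε (j + 2)) / 2) • u (j+1)
          + ((ε j + ε (j+1)) / 2) • u j
        = a (j+1) • (u (j + 2) - u (j+1)) - a j • (u (j+1) - u j) := by
      simp only [ha]
      rw [smul_sub, smul_sub]
      have h2 : ((ε j + 2 * ε (j+1) + ε (j + 2)) / 2)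
          = (ε (j+1) + ε (j + 2)) / 2 + (ε j + ε (j+1)) / 2 := by ring
      rw [h2, add_smul]
      abel
    have : ((j:ℕ) + 1 + 1) = j + 2 := rfl
    rw [this, hvec, inner_sub_right, real_inner_smul_right, real_inner_smul_right]
  rw [Finset.sum_congr rfl hint]
  -- boundary terms
  have hb0 : (1 / 2) * ⟪w 0, ε 1 • (u 1 - u 0)⟫ = a 0 * p 0 := by
    rw [real_inner_smul_right]
    simp only [ha, hp, hε0]
    ring
  have hbN : (1 / 2) * ⟪w N, (-ε (N - 1)) • (u N - u (N - 1))⟫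
      = -(a (N - 1) * q (N - 1)) := by
    rw [real_inner_smul_right]
    have hsucc : N - 1 + 1 = N := Nat.succ_pred_eq_of_pos (Nat.lt_of_lt_of_le Nat.zero_lt_one hN1)
    simp only [ha, hq, hsucc, hεN]
    ring
  rw [hb0, hbN]
  -- split the sum
  rw [Finset.sum_sub_distrib]
  have hq_shift : ∑ i ∈ Finset.Ico 1 N, a (i - 1) * q (i - 1)
      = ∑ i ∈ Finset.range (N - 1), a i * q i := by
    rw [Finset.sum_Ico_eq_sum_range]
    apply Finset.sum_congr rfl
    intro i _
    simp [Nat.add_sub_cancel_left]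
  rw [hq_shift]
  have hp_full : a 0 * p 0 + ∑ i ∈ Finset.Ico 1 N, a i * p i
      = ∑ i ∈ Finset.range N, a i * p i := by
    rw [Finset.range_eq_Ico, Finset.sum_eq_sum_Ico_succ_bot (Nat.lt_of_lt_of_le Nat.zero_lt_one hN1)]
  have hq_full : ∑ i ∈ Finset.range (N - 1), a i * q i + a (N - 1) * q (N - 1)
      = ∑ i ∈ Finset.range N, a i * q i := by
    conv_rhs => rw [show N = (N - 1) + 1 from (Nat.succ_pred_eq_of_pos (Nat.lt_of_lt_of_le Nat.zero_lt_one hN1)).symm]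
    rw [Finset.sum_range_succ]
  have hterm : ∀ i, ((ε i + ε (i + 1)) / 2)
      * ⟪gradient U (u (i + 1)) - gradient U (u i), u (i + 1) - u i⟫
      = a i * (q i - p i) := by
    intro i
    rw [inner_sub_left]
  have hEq : a 0 * p 0 + (∑ i ∈ Finset.Ico 1 N, a i * p i
        - ∑ i ∈ Finset.range (N - 1), a i * q i) + -(a (N - 1) * q (N - 1))
      = -∑ i ∈ Finset.range N, ((ε i + ε (i + 1)) / 2)
          * ⟪gradient U (u (i + 1)) - gradient U (u i), u (i + 1) - u i⟫ := by
    have : a 0 * p 0 + (∑ i ∈ Finset.Ico 1 N, a i * p i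
          - ∑ i ∈ Finset.range (N - 1), a i * q i) + -(a (N - 1) * q (N - 1))
        = (a 0 * p 0 + ∑ i ∈ Finset.Ico 1 N, a i * p i)
          - (∑ i ∈ Finset.range (N - 1), a i * q i + a (N - 1) * q (N - 1)) := by ring
    rw [this, hp_full, hq_full, ← Finset.sum_sub_distrib, ← Finset.sum_neg_distrib]
    apply Finset.sum_congr rfl
    intro i _
    rw [hterm i]
    ring
  refine ⟨hEq, ?_⟩
  rw [hEq]
  rw [neg_nonpos]
  apply Finset.sum_nonneg
  intro i _
  rw [hterm i]
  exact mul_nonneg (div_nonneg (add_nonneg (hε i) (hε (i + 1))) (by norm_num))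
    (by simpa [hq, hp, hw, inner_sub_left] using grad_mono_aux U hU hU' (u i) (u (i + 1)))
end

section
/- Any linear approximation (D₂u)_j = Σ_k c_k u_{j+k} of the second derivative with order of accuracy p > 2 must have a negative off-center coefficient: there exists k ≠ 0 with c_k < 0. -/
open Finset

/-- Any linear stencil `(D₂ u)_j = ∑_k c_k u_{j+k}` approximating the second
derivative with order of accuracy `p > 2` (encoded by the moment/order conditions
up to degree 4 at the node `x_j`, on a grid where `x_{j+k} ≠ x_j` for `k ≠ 0`)
must have a negative off-center coefficient: there is `k ≠ 0` with `c_k < 0`. -/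
theorem negative_coefficient_of_high_order
    (x : ℤ → ℝ) (j : ℤ) (c : ℤ →₀ ℝ)
    (hx : ∀ k : ℤ, k ≠ 0 → x (j + k) ≠ x j)
    (h0 : ∑ k ∈ c.support, c k = 0)
    (h1 : ∑ k ∈ c.support, c k * (x (j + k) - x j) = 0)
    (h2 : ∑ k ∈ c.support, c k * (x (j + k) - x j) ^ 2 = 2)
    (h3 : ∑ k ∈ c.support, c k * (x (j + k) - x j) ^ 3 = 0)
    (h4 : ∑ k ∈ c.support, c k * (x (j + k) - x j) ^ 4 = 0) :
    ∃ k : ℤ, k ≠ 0 ∧ c k < 0 := by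
  by_contra h
  push_neg at h
  have hterm : ∀ k ∈ c.support, c k * (x (j + k) - x j) ^ 4 = 0 := by
    rw [Finset.sum_eq_zero_iff_of_nonneg] at h4
    · exact h4
    · intro k _
      rcases eq_or_ne k 0 with rfl | hk
      · simp
      · exact mul_nonneg (h k hk) (by positivity)
  have hzero : ∀ k ∈ c.support, c k * (x (j + k) - x j) ^ 2 = 0 := by
    intro k hk
    rcases eq_or_ne k 0 with rfl | hk0
    · simp
    · have hd : x (j + k) - x j ≠ 0 := sub_ne_zero.mpr (hx k hk0)
      have := hterm k hk
      have hc : c k = 0 := by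
        rcases mul_eq_zero.mp this with h' | h'
        · exact h'
        · exact absurd h' (pow_ne_zero 4 hd)
      simp [hc]
  rw [Finset.sum_eq_zero hzero] at h2
  norm_num at h2
end

section
/- If (D₂u)_j = Σ_k c_k u_{j+k} is a linear stencil with some coefficient c_k < 0 for k ≠ 0, then D₂ is not entropy dissipative for every convex entropy: there exists a convex function U : ℝ → ℝ and a grid function u such that Σ_i U'(u_i)(D₂u)_i > 0. -/
open Finset

/-- The entropy `U x = (max x 0)^2`. -/
noncomputable def Uent : ℝ → ℝ := fun x => (max x 0) ^ 2

lemma Uent_hasDerivAt (x : ℝ) : HasDerivAt Uent (2 * max x 0) x := by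
  rcases lt_trichotomy x 0 with hx | hx | hx
  · have h : Uent =ᶠ[nhds x] (fun _ => (0 : ℝ)) := by
      filter_upwards [eventually_lt_nhds hx] with y hy
      simp [Uent, max_eq_right hy.le]
    have : HasDerivAt (fun _ : ℝ => (0 : ℝ)) 0 x := hasDerivAt_const x 0
    have := this.congr_of_eventuallyEq h
    simpa [max_eq_right hx.le] using this
  · subst hx
    rw [hasDerivAt_iff_isLittleO]
    rw [Asymptotics.isLittleO_iff]
    intro ε hε
    filter_upwards [Metric.ball_mem_nhds (0 : ℝ) hε] with y hy
    have hy' : |y| < ε := by simpa [Real.dist_eq] using hy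
    have h1 : |max y 0| ≤ |y| := by
      rcases le_total y 0 with h | h
      · simp [max_eq_right h]
      · simp [max_eq_left h, abs_of_nonneg h]
    have : ‖Uent y - Uent 0 - (y - 0) • (2 * max 0 0)‖ = |max y 0| * |max y 0| := by
      simp [Uent, sq, abs_mul]
    rw [this]
    calc |max y 0| * |max y 0| ≤ ε * |y| := by
          apply mul_le_mul (le_of_lt (lt_of_le_of_lt h1 hy')) h1 (abs_nonneg _)
            hε.le
      _ = ε * ‖y - 0‖ := by simp
  · have h : Uent =ᶠ[nhds x] (fun y => y ^ 2) := by
      filter_upwards [eventually_gt_nhds hx] with y hy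
      simp [Uent, max_eq_left hy.le]
    have : HasDerivAt (fun y : ℝ => y ^ 2) (2 * x) x := by
      simpa using (hasDerivAt_pow 2 x)
    have := this.congr_of_eventuallyEq h
    simpa [max_eq_left hx.le] using this

lemma Uent_deriv (x : ℝ) : deriv Uent x = 2 * max x 0 :=
  (Uent_hasDerivAt x).deriv

lemma Uent_diff : Differentiable ℝ Uent := fun x =>
  (Uent_hasDerivAt x).differentiableAt

lemma Uent_convex : ConvexOn ℝ Set.univ Uent := by
  apply Monotone.convexOn_univ_of_deriv Uent_diff
  intro a b hab
  rw [Uent_deriv, Uent_deriv]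
  exact mul_le_mul_of_nonneg_left (max_le_max hab le_rfl) (by norm_num)

/-- If the linear stencil `(D₂ u)_i = ∑_l c_l u_{i+l}` has some coefficient
`c_k < 0` with `k ≠ 0`, then it is not entropy dissipative for every convex
entropy: there exist a convex differentiable `U : ℝ → ℝ` and a grid function `u`
such that `∑_i U'(u_i)(D₂ u)_i > 0`. -/
theorem stencil_not_entropy_dissipative
    (c : ℤ →₀ ℝ) (k : ℤ) (hk : k ≠ 0) (hck : c k < 0) :
    ∃ U : ℝ → ℝ, ConvexOn ℝ Set.univ U ∧ Differentiable ℝ U ∧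
      ∃ u : ℤ → ℝ,
        0 < ∑' i : ℤ, deriv U (u i) * ∑ l ∈ c.support, c l * u (i + l) := by
  set ε : ℝ := (-c k) / (2 * (|c 0| + 1)) with hε
  have hden : (0 : ℝ) < 2 * (|c 0| + 1) := by positivity
  have hεpos : 0 < ε := div_pos (by linarith) hden
  -- the grid function
  set u : ℤ → ℝ := fun i => if i = 0 then ε else if i = k then -1 else 0 with hu
  refine ⟨Uent, Uent_convex, Uent_diff, u, ?_⟩
  have hval : ∀ i : ℤ, i ≠ 0 → deriv Uent (u i) = 0 := by
    intro i hi
    rw [Uent_deriv]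
    by_cases hik : i = k <;> simp [hu, hi, hik, hk]
  have htsum : (∑' i : ℤ, deriv Uent (u i) * ∑ l ∈ c.support, c l * u (i + l))
      = deriv Uent (u 0) * ∑ l ∈ c.support, c l * u (0 + l) := by
    apply tsum_eq_single
    intro i hi
    rw [hval i hi, zero_mul]
  rw [htsum]
  have hU0 : deriv Uent (u 0) = 2 * ε := by
    rw [Uent_deriv]
    simp [hu, max_eq_left hεpos.le]
  have hsum : (∑ l ∈ c.support, c l * u (0 + l)) = c 0 * ε - c k := by
    have hk' : k ∈ c.support := Finsupp.mem_support_iff.mpr hck.ne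
    by_cases h0 : (0 : ℤ) ∈ c.support
    · rw [Finset.sum_eq_add_of_mem 0 k h0 hk' hk.symm ?_]
      · simp [hu, hk]; ring
      · intro l hl hl'
        simp [hu, hl'.1, hl'.2]
    · rw [Finset.sum_eq_single_of_mem k hk' ?_]
      · simp [hu, hk]
        have : c 0 = 0 := Finsupp.notMem_support_iff.mp h0
        simp [this]
      · intro l hl hl'
        have hl0 : l ≠ 0 := fun h => h0 (h ▸ hl)
        simp [hu, hl0, hl']
  rw [hU0, hsum]
  have hcε : c 0 * ε ≥ -(-c k) / 2 := by
    have h1 : c 0 * ε ≥ -(|c 0| * ε) := by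
      have := neg_abs_le (c 0)
      nlinarith [abs_nonneg (c 0)]
    have h2 : |c 0| * ε ≤ (|c 0| + 1) * ε := by nlinarith
    have h3 : (|c 0| + 1) * ε = (-c k) / 2 := by
      rw [hε]
      field_simp
    linarith
  have : c 0 * ε - c k > 0 := by
    have hck2 : (0:ℝ) < -c k := by linarith
    linarith
  positivity
end

section
/- Any linear discrete second derivative operator of order of accuracy p > 2 fails to be entropy dissipative for all convex entropies: there exists a convex entropy U and a grid function u with Σ_i U'(u_i)(D₂u)_i > 0. -/
/-!
If every off-center coefficient of the stencil were nonnegative, then, since `l² ≥ 1` for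
`l ≠ 0`, the fourth moment would dominate `h²` times the second one, which is incompatible
with `∑ c_l (l h)² = 2` and `∑ c_l (l h)⁴ = 0`. So some `c_k` with `k ≠ 0` is negative.

Take the entropy `U(t) = ∫₀ᵗ max s 0 ds`, convex with `U' = max · 0`, and the data `u`
equal to `1` at `0`, to `-A` at `k`, and `0` elsewhere. Then `U'(u_i) = 0` for `i ≠ 0`, and
the single remaining term of the entropy production is `U'(1) (c_0 - A c_k)`, positive once
`A` is large.
-/

open Finset

section Stencil

variable (c : ℤ →₀ ℝ)

lemma sq_mul_sum_mul_sq_le_sum_mul_pow_four (hc : ∀ k ≠ 0, 0 ≤ c k) (x : ℝ) :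
    x ^ 2 * ∑ l ∈ c.support, c l * ((l : ℝ) * x) ^ 2 ≤
      ∑ l ∈ c.support, c l * ((l : ℝ) * x) ^ 4 := by
  rw [mul_sum]
  refine sum_le_sum fun l _ => ?_
  rcases eq_or_ne l 0 with rfl | hl
  · simp
  · have hl2 : (1 : ℝ) ≤ (l : ℝ) ^ 2 := by
      exact_mod_cast (one_le_sq_iff_one_le_abs l).mpr (Int.one_le_abs hl)
    have hx : x ^ 2 * ((l : ℝ) * x) ^ 2 ≤ ((l : ℝ) * x) ^ 4 :=
      calc _ ≤ (l : ℝ) ^ 2 * (x ^ 2 * ((l : ℝ) * x) ^ 2) :=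
            le_mul_of_one_le_left (by positivity) hl2
        _ = _ := by ring
    nlinarith [mul_le_mul_of_nonneg_left hx (hc l hl)]

lemma exists_coeff_neg_of_moments (h : ℝ)
    (h2 : ∑ l ∈ c.support, c l * ((l : ℝ) * h) ^ 2 = 2)
    (h4 : ∑ l ∈ c.support, c l * ((l : ℝ) * h) ^ 4 = 0) :
    ∃ k ≠ 0, c k < 0 := by
  by_contra! hc
  have hle := sq_mul_sum_mul_sq_le_sum_mul_pow_four c hc h
  rw [h2, h4] at hle
  have hh : h = 0 := by nlinarith [sq_nonneg h]
  simp [hh] at h2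

lemma sum_mul_single_add (a i : ℤ) (b : ℝ) :
    ∑ l ∈ c.support, c l * (Pi.single a b : ℤ → ℝ) (i + l) = c (a - i) * b := by
  have hshift : ∀ l, i + l = a ↔ l = a - i := fun l => by omega
  simp only [Pi.single_apply, hshift, mul_ite, mul_zero, sum_ite_eq', Finsupp.mem_support_iff]
  split_ifs with h
  · rfl
  · simp [not_not.mp h]

end Stencil

lemma exists_entropy_production_pos {U : ℝ → ℝ} (hU0 : ∀ t ≤ 0, deriv U t = 0)
    (hU1 : 0 < deriv U 1) (c : ℤ →₀ ℝ) {k : ℤ} (hk : k ≠ 0) (hck : c k < 0) :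
    ∃ u : ℤ → ℝ,
      0 < ∑' i : ℤ, deriv U (u i) * ∑ l ∈ c.support, c l * u (i + l) := by
  set A := (|c 0| + 1) / -c k
  have hA : 0 < A := div_pos (by positivity) (neg_pos.mpr hck)
  have hAk : A * -c k = |c 0| + 1 := div_mul_cancel₀ _ (neg_pos.mpr hck).ne'
  set u : ℤ → ℝ := Pi.single 0 1 + Pi.single k (-A) with hu
  have hu_nonpos : ∀ i ≠ 0, u i ≤ 0 := fun i hi => by
    simp only [hu, Pi.add_apply, Pi.single_apply, if_neg hi, zero_add]
    split_ifs <;> linarith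
  refine ⟨u, ?_⟩
  rw [tsum_eq_single 0 fun i hi => by rw [hU0 _ (hu_nonpos i hi), zero_mul]]
  simp only [hu, Pi.add_apply, mul_add, sum_add_distrib, sum_mul_single_add,
    Pi.single_eq_same, Pi.single_eq_of_ne' hk, add_zero, sub_zero, mul_one]
  have hpos : 0 < c 0 + A * -c k := by linarith [neg_abs_le (c 0)]
  nlinarith [mul_pos hU1 hpos]

lemma hasDerivAt_integral_posPart (t : ℝ) :
    HasDerivAt (fun t => ∫ s in (0 : ℝ)..t, max s 0) (max t 0) t :=
  ((continuous_id.max continuous_const).integral_hasStrictDerivAt 0 t).hasDerivAt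

lemma convexOn_integral_posPart :
    ConvexOn ℝ Set.univ (fun t => ∫ s in (0 : ℝ)..t, max s 0) := by
  refine Monotone.convexOn_univ_of_deriv
    (fun t => (hasDerivAt_integral_posPart t).differentiableAt) fun a b hab => ?_
  simp only [(hasDerivAt_integral_posPart _).deriv]
  exact max_le_max_right 0 hab

theorem high_order_laplacian_not_entropy_dissipative_general
    (h : ℝ) (c : ℤ →₀ ℝ)
    (h2 : ∑ l ∈ c.support, c l * ((l : ℝ) * h) ^ 2 = 2)
    (h4 : ∑ l ∈ c.support, c l * ((l : ℝ) * h) ^ 4 = 0) :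
    ∃ U : ℝ → ℝ, ConvexOn ℝ Set.univ U ∧ Differentiable ℝ U ∧
      ∃ u : ℤ → ℝ,
        0 < ∑' i : ℤ, deriv U (u i) * ∑ l ∈ c.support, c l * u (i + l) := by
  obtain ⟨k, hk, hck⟩ := exists_coeff_neg_of_moments c h h2 h4
  have hderiv (t : ℝ) := (hasDerivAt_integral_posPart t).deriv
  refine ⟨_, convexOn_integral_posPart,
    fun t => (hasDerivAt_integral_posPart t).differentiableAt, ?_⟩
  exact exists_entropy_production_pos (fun t ht => by rw [hderiv, max_eq_right ht])
    (by rw [hderiv]; norm_num) c hk hck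

/-- Any linear discrete second derivative operator of order of accuracy `p > 2`
(a stencil `(D₂ u)_j = ∑_l c_l u_{j+l}` on the uniform grid `x_j = j h`, encoded by
the moment/order conditions up to degree 4) fails to be entropy dissipative for all
convex entropies: there exist a convex differentiable entropy `U` and a grid
function `u` with `∑_i U'(u_i)(D₂ u)_i > 0`. -/
theorem high_order_laplacian_not_entropy_dissipative
    (h : ℝ) (hh : 0 < h) (c : ℤ →₀ ℝ)
    (h0 : ∑ l ∈ c.support, c l = 0)
    (h1 : ∑ l ∈ c.support, c l * ((l : ℝ) * h) = 0)
    (h2 : ∑ l ∈ c.support, c l * ((l : ℝ) * h) ^ 2 = 2)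
    (h3 : ∑ l ∈ c.support, c l * ((l : ℝ) * h) ^ 3 = 0)
    (h4 : ∑ l ∈ c.support, c l * ((l : ℝ) * h) ^ 4 = 0) :
    ∃ U : ℝ → ℝ, ConvexOn ℝ Set.univ U ∧ Differentiable ℝ U ∧
      ∃ u : ℤ → ℝ,
        0 < ∑' i : ℤ, deriv U (u i) * ∑ l ∈ c.support, c l * u (i + l) :=
  high_order_laplacian_not_entropy_dissipative_general h c h2 h4
end
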